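/- arXiv:0803.0676 — 7 statements merged into one kernel-verified Lean document; each statement's English description precedes it below -/
import Mathlib

section
/- Let R be a real closed field with natural valuation v and value group Γ. Let (A₁,B₁) and (A₂,B₂) be proper cuts of R (all four sets nonempty) with A₁ ⊆ A₂, and let P₁, P₂ be the corresponding orderings of the rational function field R(X). Let Sᵢ = {v(b−a) : a ∈ Aᵢ, b ∈ Bᵢ} ⊆ Γ for i = 1,2. If S₁ ≠ S₂, then the associated ℝ-places differ: λ_{P₁} ≠ λ_{P₂} as functions R(X) → ℝ ∪ {∞}. -/
attribute [local instance] Classical.propDecidable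

/-- An ordering of a field `K`: `P + P ⊆ P`, `P·P ⊆ P`, `P ∪ (−P) = K`, `P ∩ (−P) = {0}`. -/
def IsOrdering {K : Type*} [Field K] (P : Set K) : Prop :=
  (∀ x ∈ P, ∀ y ∈ P, x + y ∈ P) ∧ (∀ x ∈ P, ∀ y ∈ P, x * y ∈ P) ∧
    (∀ x : K, x ∈ P ∨ -x ∈ P) ∧ (∀ x : K, x ∈ P → -x ∈ P → x = 0)

/-- The valuation ring `A(P) = {x : ∃ q ∈ ℚ, q > 0, q − x ∈ P and q + x ∈ P}` of an ordering. -/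
def orderValRing {K : Type*} [Field K] (P : Set K) : Set K :=
  {x : K | ∃ q : ℚ, 0 < q ∧ (q : K) - x ∈ P ∧ (q : K) + x ∈ P}

/-- The ℝ-place `λ_P : K → ℝ ∪ {∞}` associated to an ordering `P`:
`λ_P(x) = sup {q ∈ ℚ : x − q ∈ P}` for `x ∈ A(P)` and `∞` otherwise. -/
noncomputable def rPlace {K : Type*} [Field K] (P : Set K) (x : K) : WithTop ℝ :=
  if x ∈ orderValRing P then
    ((sSup {r : ℝ | ∃ q : ℚ, r = (q : ℝ) ∧ x - (q : K) ∈ P} : ℝ) : WithTop ℝ)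
  else ⊤

/-- The ordering of the rational function field `R(X)` determined by a proper cut `(A,B)` of `R`:
a nonzero `f` is in the ordering iff there are `a ∈ A`, `b ∈ B` such that `f` is defined with
positive values throughout `(a,b)`. -/
def cutOrdering {R : Type*} [Field R] [LinearOrder R] [IsStrictOrderedRing R] (A B : Set R) : Set (RatFunc R) :=
  {f : RatFunc R | f = 0 ∨ ∃ a ∈ A, ∃ b ∈ B, ∀ c : R, a < c → c < b →
    Polynomial.eval c f.denom ≠ 0 ∧ 0 < RatFunc.eval (RingHom.id R) c f}

/-! Choose a value `v (b - a)` lying in one of `S₁, S₂` but not in the other, say with `a ∈ A₁`,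
`b ∈ B₁`, and put `d = b - a`. The linear function `f = (X - a) / d` takes values in `(0, 1)` on
`(a, b)`, so it lies in the valuation ring of `P₁`. As `v d ∉ S₂`, every width `b' - a'` of the
second cut exceeds all multiples `n d` (otherwise `a' + n d ∈ B₂` and `v (n d) = v d`), so `f` is
unbounded on every interval `(a', b')` of that cut and lies outside the valuation ring of `P₂`.
Hence `λ_{P₁} f` is finite while `λ_{P₂} f = ∞`. -/

open Polynomial

theorem rPlace_ne_of_mem_orderValRing_of_not_mem {K : Type*} [Field K] {P P' : Set K} {x : K}
    (hx : x ∈ orderValRing P) (hx' : x ∉ orderValRing P') : rPlace P ≠ rPlace P' := by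
  intro h
  simpa [rPlace, hx, hx'] using congrFun h x

theorem mem_of_le_of_mem_right {α : Type*} [Preorder α] {A B : Set α}
    (hcut : A ∪ B = Set.univ) (hlt : ∀ a ∈ A, ∀ b ∈ B, a < b) {b x : α} (hb : b ∈ B)
    (hbx : b ≤ x) : x ∈ B :=
  ((Set.mem_union _ _ _).1 (hcut ▸ Set.mem_univ x)).resolve_left
    fun hx => (hlt x hx b hb).not_ge hbx

theorem exists_lt_abs_sub_of_four_mul_lt_sub {R : Type*} [Field R] [LinearOrder R]
    [IsStrictOrderedRing R] {a a' b' t : R} (hab : a' < b') (ht : 4 * t < b' - a') :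
    ∃ c, a' < c ∧ c < b' ∧ t < |c - a| := by
  by_contra! h
  have h₁ := abs_le.1 (h ((3 * a' + b') / 4) (by linarith) (by linarith))
  have h₂ := abs_le.1 (h ((a' + 3 * b') / 4) (by linarith) (by linarith))
  linarith [h₁.1, h₂.2]

section Field

variable {R : Type*} [Field R]

theorem ratCast_eq_algebraMap_C (q : ℚ) :
    (q : RatFunc R) = algebraMap R[X] (RatFunc R) (C (q : R)) := by
  rw [← map_ratCast (algebraMap R (RatFunc R)) q,
    IsScalarTower.algebraMap_apply R R[X] (RatFunc R), algebraMap_eq]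

theorem natDegree_C_inv_mul_X_sub_C {a d : R} (hd : d ≠ 0) :
    (C d⁻¹ * (X - C a)).natDegree = 1 := by
  rw [natDegree_C_mul (inv_ne_zero hd), natDegree_X_sub_C]

theorem eval_C_inv_mul_X_sub_C (a d c : R) : (C d⁻¹ * (X - C a)).eval c = (c - a) / d := by
  simp [div_eq_inv_mul]

end Field

section CutOrdering

variable {R : Type*} [Field R] [LinearOrder R] [IsStrictOrderedRing R] {A B : Set R}

theorem algebraMap_mem_cutOrdering {p : R[X]} {a b : R} (ha : a ∈ A) (hb : b ∈ B)
    (h : ∀ c, a < c → c < b → 0 < p.eval c) :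
    algebraMap R[X] (RatFunc R) p ∈ cutOrdering A B := by
  refine Or.inr ⟨a, ha, b, hb, fun c hac hcb => ?_⟩
  rw [RatFunc.denom_algebraMap, RatFunc.eval_algebraMap]
  exact ⟨by simp, h c hac hcb⟩

theorem exists_forall_eval_pos_of_algebraMap_mem_cutOrdering {p : R[X]} (hp : p ≠ 0)
    (h : algebraMap R[X] (RatFunc R) p ∈ cutOrdering A B) :
    ∃ a ∈ A, ∃ b ∈ B, ∀ c, a < c → c < b → 0 < p.eval c := by
  rcases h with h | ⟨a, ha, b, hb, h⟩
  · exact absurd (RatFunc.algebraMap_injective R (by simpa using h)) hp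
  · refine ⟨a, ha, b, hb, fun c hac hcb => ?_⟩
    simpa [RatFunc.eval_algebraMap] using (h c hac hcb).2

theorem algebraMap_mem_orderValRing_cutOrdering {p : R[X]} {a b : R} (ha : a ∈ A) (hb : b ∈ B)
    {q : ℚ} (hq : 0 < q) (h : ∀ c, a < c → c < b → |p.eval c| < q) :
    algebraMap R[X] (RatFunc R) p ∈ orderValRing (cutOrdering A B) := by
  refine ⟨q, hq, ?_, ?_⟩
  · rw [ratCast_eq_algebraMap_C, ← map_sub]
    refine algebraMap_mem_cutOrdering ha hb fun c hac hcb => ?_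
    simpa [sub_pos] using (abs_lt.1 (h c hac hcb)).2
  · rw [ratCast_eq_algebraMap_C, ← map_add]
    refine algebraMap_mem_cutOrdering ha hb fun c hac hcb => ?_
    simpa [neg_lt_iff_pos_add'] using (abs_lt.1 (h c hac hcb)).1

theorem exists_forall_abs_eval_lt_of_algebraMap_mem_orderValRing {p : R[X]} (hp : 0 < p.natDegree)
    (h : algebraMap R[X] (RatFunc R) p ∈ orderValRing (cutOrdering A B)) :
    ∃ q : ℚ, ∃ a ∈ A, ∃ b ∈ B, ∀ c, a < c → c < b → |p.eval c| < q := by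
  obtain ⟨q, -, hsub, hadd⟩ := h
  rw [ratCast_eq_algebraMap_C, ← map_sub] at hsub
  rw [ratCast_eq_algebraMap_C, ← map_add] at hadd
  obtain ⟨a₁, ha₁, b₁, hb₁, h₁⟩ := exists_forall_eval_pos_of_algebraMap_mem_cutOrdering
    (sub_ne_zero.2 (fun h' => by simp [← h'] at hp)) hsub
  obtain ⟨a₂, ha₂, b₂, hb₂, h₂⟩ := exists_forall_eval_pos_of_algebraMap_mem_cutOrdering
    (fun h' => by simp [eq_neg_of_add_eq_zero_right h'] at hp) hadd
  refine ⟨q, max a₁ a₂, max_rec' A ha₁ ha₂, min b₁ b₂, min_rec' B hb₁ hb₂,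
    fun c hac hcb => abs_lt.2 ⟨?_, ?_⟩⟩
  · have := h₂ c (le_max_right _ _ |>.trans_lt hac) (hcb.trans_le (min_le_right _ _))
    simp only [eval_add, eval_C] at this
    linarith
  · have := h₁ c (le_max_left _ _ |>.trans_lt hac) (hcb.trans_le (min_le_left _ _))
    simp only [eval_sub, eval_C] at this
    linarith

theorem algebraMap_C_inv_mul_X_sub_C_mem_orderValRing {a b : R} (ha : a ∈ A) (hb : b ∈ B)
    (hab : a < b) :
    algebraMap R[X] (RatFunc R) (C (b - a)⁻¹ * (X - C a)) ∈ orderValRing (cutOrdering A B) := by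
  refine algebraMap_mem_orderValRing_cutOrdering ha hb one_pos fun c hac hcb => ?_
  rw [eval_C_inv_mul_X_sub_C, Rat.cast_one, abs_lt, lt_div_iff₀ (sub_pos.2 hab),
    div_lt_iff₀ (sub_pos.2 hab)]
  constructor <;> linarith

theorem algebraMap_C_inv_mul_X_sub_C_not_mem_orderValRing (hlt : ∀ a ∈ A, ∀ b ∈ B, a < b)
    {a d : R} (hd : 0 < d) (hsmall : ∀ a' ∈ A, ∀ b' ∈ B, ∀ n : ℕ, (n : R) * d < b' - a') :
    algebraMap R[X] (RatFunc R) (C d⁻¹ * (X - C a)) ∉ orderValRing (cutOrdering A B) := by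
  intro h
  obtain ⟨q, a', ha', b', hb', hbound⟩ := exists_forall_abs_eval_lt_of_algebraMap_mem_orderValRing
    (by rw [natDegree_C_inv_mul_X_sub_C hd.ne']; exact one_pos) h
  have hwide : 4 * ((q : R) * d) < b' - a' := calc
    4 * ((q : R) * d) ≤ (⌈4 * q⌉₊ : R) * d := by
      rw [← mul_assoc]
      gcongr
      exact_mod_cast Nat.le_ceil (4 * q)
    _ < b' - a' := hsmall a' ha' b' hb' _
  obtain ⟨c, hac, hcb, hlarge⟩ := exists_lt_abs_sub_of_four_mul_lt_sub (hlt a' ha' b' hb') hwide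
  have := hbound c hac hcb
  rw [eval_C_inv_mul_X_sub_C, abs_div, abs_of_pos hd, div_lt_iff₀ hd] at this
  exact hlarge.not_gt this

end CutOrdering

section Valuation

variable {R Γ : Type*} [Field R] [LinearOrder R] [IsStrictOrderedRing R] [PartialOrder Γ]
  {v : R → Γ}

theorem val_natCast_mul
    (hv_le : ∀ a b : R, a ≠ 0 → b ≠ 0 → (v b ≤ v a ↔ ∃ n : ℕ, |a| ≤ (n : R) * |b|))
    {n : ℕ} (hn : n ≠ 0) {d : R} (hd : d ≠ 0) : v (n * d) = v d := by
  have hnd : (n : R) * d ≠ 0 := mul_ne_zero (Nat.cast_ne_zero.2 hn) hd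
  refine le_antisymm ((hv_le d _ hd hnd).2 ⟨1, ?_⟩) ((hv_le _ d hnd hd).2 ⟨n, by simp [abs_mul]⟩)
  rw [abs_mul, Nat.cast_one, one_mul, Nat.abs_cast]
  exact le_mul_of_one_le_left (abs_nonneg d) (Nat.one_le_cast.2 (Nat.one_le_iff_ne_zero.2 hn))

theorem natCast_mul_lt_sub_of_val_not_mem {A B : Set R}
    (hv_le : ∀ a b : R, a ≠ 0 → b ≠ 0 → (v b ≤ v a ↔ ∃ n : ℕ, |a| ≤ (n : R) * |b|))
    (hcut : A ∪ B = Set.univ) (hlt : ∀ a ∈ A, ∀ b ∈ B, a < b) {d : R} (hd : 0 < d)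
    (hval : v d ∉ {γ : Γ | ∃ a ∈ A, ∃ b ∈ B, γ = v (b - a)}) :
    ∀ a ∈ A, ∀ b ∈ B, ∀ n : ℕ, (n : R) * d < b - a := by
  intro a ha b hb n
  by_contra! hle
  have hn : n ≠ 0 := by
    rintro rfl
    rw [Nat.cast_zero, zero_mul] at hle
    linarith [hlt a ha b hb]
  refine hval ⟨a, ha, a + n * d, mem_of_le_of_mem_right hcut hlt hb (by linarith), ?_⟩
  rw [add_sub_cancel_left, val_natCast_mul hv_le hn hd.ne']

theorem rPlace_cutOrdering_ne_of_val_not_mem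
    (hv_le : ∀ a b : R, a ≠ 0 → b ≠ 0 → (v b ≤ v a ↔ ∃ n : ℕ, |a| ≤ (n : R) * |b|))
    {A B A' B' : Set R} (hlt : ∀ a ∈ A, ∀ b ∈ B, a < b) (hcut' : A' ∪ B' = Set.univ)
    (hlt' : ∀ a ∈ A', ∀ b ∈ B', a < b) {a b : R} (ha : a ∈ A) (hb : b ∈ B)
    (hval : v (b - a) ∉ {γ : Γ | ∃ a ∈ A', ∃ b ∈ B', γ = v (b - a)}) :
    rPlace (cutOrdering A B) ≠ rPlace (cutOrdering A' B') := by
  have hab := hlt a ha b hb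
  have hd := sub_pos.2 hab
  exact rPlace_ne_of_mem_orderValRing_of_not_mem
    (algebraMap_C_inv_mul_X_sub_C_mem_orderValRing ha hb hab)
    (algebraMap_C_inv_mul_X_sub_C_not_mem_orderValRing hlt' hd
      (natCast_mul_lt_sub_of_val_not_mem hv_le hcut' hlt' hd hval))

end Valuation

theorem places_differ_of_S_ne_general {R Γ : Type*} [Field R] [LinearOrder R] [IsStrictOrderedRing R] [LinearOrder Γ]
    -- v is the natural valuation of R with value group Γ:
    (v : R → Γ)
    (hv_le : ∀ a b : R, a ≠ 0 → b ≠ 0 → (v b ≤ v a ↔ ∃ n : ℕ, |a| ≤ (n : R) * |b|))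
    -- (A₁,B₁) and (A₂,B₂) are proper cuts of R:
    (A₁ B₁ A₂ B₂ : Set R)
    (hcut₁ : A₁ ∪ B₁ = Set.univ)
    (hlt₁ : ∀ a ∈ A₁, ∀ b ∈ B₁, a < b)
    (hcut₂ : A₂ ∪ B₂ = Set.univ)
    (hlt₂ : ∀ a ∈ A₂, ∀ b ∈ B₂, a < b)
    (S₁ S₂ : Set Γ)
    (hS₁ : S₁ = {γ : Γ | ∃ a ∈ A₁, ∃ b ∈ B₁, γ = v (b - a)})
    (hS₂ : S₂ = {γ : Γ | ∃ a ∈ A₂, ∃ b ∈ B₂, γ = v (b - a)})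
    (hne : S₁ ≠ S₂) :
    rPlace (cutOrdering A₁ B₁) ≠ rPlace (cutOrdering A₂ B₂) := by
  subst hS₁ hS₂
  obtain ⟨_, ⟨⟨a, ha, b, hb, rfl⟩, hval⟩ | ⟨⟨a, ha, b, hb, rfl⟩, hval⟩⟩ :=
    Set.symmDiff_nonempty.2 hne
  · exact rPlace_cutOrdering_ne_of_val_not_mem hv_le hlt₁ hcut₂ hlt₂ ha hb hval
  · exact (rPlace_cutOrdering_ne_of_val_not_mem hv_le hlt₂ hcut₁ hlt₁ ha hb hval).symm

/-- if the lower cuts `S₁ ≠ S₂` then the ℝ-places of the orderings of `R(X)`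
corresponding to the cuts `(A₁,B₁)` and `(A₂,B₂)` differ. -/
theorem places_differ_of_S_ne {R Γ : Type*} [Field R] [LinearOrder R] [IsStrictOrderedRing R] [AddCommGroup Γ] [LinearOrder Γ] [IsOrderedAddMonoid Γ]
    -- R is real closed:
    (hsq : ∀ a : R, 0 ≤ a → ∃ b : R, b * b = a)
    (hodd : ∀ p : Polynomial R, Odd p.natDegree → ∃ x : R, p.eval x = 0)
    -- v is the natural valuation of R with value group Γ:
    (v : R → Γ)
    (hv_surj : ∀ γ : Γ, ∃ a : R, a ≠ 0 ∧ v a = γ)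
    (hv_mul : ∀ a b : R, a ≠ 0 → b ≠ 0 → v (a * b) = v a + v b)
    (hv_le : ∀ a b : R, a ≠ 0 → b ≠ 0 → (v b ≤ v a ↔ ∃ n : ℕ, |a| ≤ (n : R) * |b|))
    -- (A₁,B₁) and (A₂,B₂) are proper cuts of R:
    (A₁ B₁ A₂ B₂ : Set R)
    (hcut₁ : A₁ ∪ B₁ = Set.univ) (hdisj₁ : A₁ ∩ B₁ = ∅)
    (hlt₁ : ∀ a ∈ A₁, ∀ b ∈ B₁, a < b)
    (hcut₂ : A₂ ∪ B₂ = Set.univ) (hdisj₂ : A₂ ∩ B₂ = ∅)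
    (hlt₂ : ∀ a ∈ A₂, ∀ b ∈ B₂, a < b)
    (hA₁ : A₁.Nonempty) (hB₁ : B₁.Nonempty) (hA₂ : A₂.Nonempty) (hB₂ : B₂.Nonempty)
    (hsub : A₁ ⊆ A₂)
    (S₁ S₂ : Set Γ)
    (hS₁ : S₁ = {γ : Γ | ∃ a ∈ A₁, ∃ b ∈ B₁, γ = v (b - a)})
    (hS₂ : S₂ = {γ : Γ | ∃ a ∈ A₂, ∃ b ∈ B₂, γ = v (b - a)})
    (hne : S₁ ≠ S₂) :
    rPlace (cutOrdering A₁ B₁) ≠ rPlace (cutOrdering A₂ B₂) :=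
  places_differ_of_S_ne_general v hv_le A₁ B₁ A₂ B₂ hcut₁ hlt₁ hcut₂ hlt₂ S₁ S₂ hS₁ hS₂ hne
end

section
/- Let R be a real closed field with natural valuation v, value group Γ, and ring of finite elements O = {a ∈ R : |a| ≤ n for some n ∈ ℕ}. Let (A₁,B₁) and (A₂,B₂) be distinct proper cuts of R with A₁ ⊊ A₂, let S = {v(b−a) : a ∈ A₁, b ∈ B₁} = {v(b−a) : a ∈ A₂, b ∈ B₂} (assumed equal) and U = {v(a′−a) : a, a′ ∈ B₁ ∩ A₂, a < a′}. If S ∩ U ≠ ∅, then there exists a polynomial f ∈ R[X] of degree 1, elements a₁ ∈ A₁, b₁ ∈ B₁ and a₂ ∈ A₂, b₂ ∈ B₂, such that for every c with a₁ < c < b₁ one has f(c) > 0 and f(c) is a unit of O (both f(c) and f(c)⁻¹ lie in O), while for every c with a₂ < c < b₂ one has f(c) < 0. -/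
/-!
Pick `γ ∈ S ∩ U`, say `γ = v (b₁ - a₁) = v (a' - a)` with `a₁ ∈ A₁`, `b₁ ∈ B₁` and
`a < a'` in `B₁ ∩ A₂`. Replacing `b₁` by `b := min a b₁`, the line through `(a', 0)` and
`(b, 1)`, namely `f x = (a' - x) / (a' - b)`, is `> 1` on `(a₁, b)` and negative beyond `a'`.
Since `v (b₁ - a₁) ≥ v (a' - a)`, some `n` has `b - a₁ ≤ n (a' - a) ≤ n (a' - b)`, so `f` is
also bounded by `n + 1` on `(a₁, b)`: its values there are units of the finite elements.
-/

open Polynomial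

section LinearOrderedField

variable {R : Type*} [Field R] [LinearOrder R] [IsStrictOrderedRing R]

theorem degree_C_neg_inv_mul_X_sub_C {δ : R} (hδ : δ ≠ 0) (a : R) :
    (C (-δ⁻¹) * (X - C a)).degree = 1 := by
  rw [degree_C_mul (by simpa using hδ), degree_X_sub_C]

theorem eval_C_neg_inv_mul_X_sub_C (δ a c : R) :
    (C (-δ⁻¹) * (X - C a)).eval c = (a - c) / δ := by
  simp only [eval_mul, eval_C, eval_sub, eval_X]
  ring

theorem one_lt_div_sub_and_div_sub_le {a₁ b a' c : R} {n : ℕ} (hba' : b < a')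
    (hbound : b - a₁ ≤ n * (a' - b)) (ha₁c : a₁ < c) (hcb : c < b) :
    1 < (a' - c) / (a' - b) ∧ (a' - c) / (a' - b) ≤ n + 1 := by
  have hδ : 0 < a' - b := sub_pos.2 hba'
  constructor
  · rw [one_lt_div hδ]
    linarith
  · rw [div_le_iff₀ hδ]
    linarith

theorem exists_abs_le_natCast_and_abs_inv_le_natCast {x : R} {n : ℕ} (h1 : 1 ≤ x)
    (hn : x ≤ n) : (∃ m : ℕ, |x| ≤ m) ∧ ∃ m : ℕ, |x⁻¹| ≤ m := by
  have hx : 0 < x := zero_lt_one.trans_le h1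
  refine ⟨⟨n, by rwa [abs_of_pos hx]⟩, ⟨1, ?_⟩⟩
  rw [abs_of_pos (inv_pos.2 hx), Nat.cast_one]
  exact inv_le_one_of_one_le₀ h1

end LinearOrderedField

theorem separating_linear_poly_of_S_inter_U_nonempty_general {R Γ : Type*} [Field R] [LinearOrder R] [IsStrictOrderedRing R]
    [LinearOrder Γ]
    -- v is the natural valuation of R with value group Γ:
    (v : R → Γ)
    (hv_le : ∀ a b : R, a ≠ 0 → b ≠ 0 → (v b ≤ v a ↔ ∃ n : ℕ, |a| ≤ (n : R) * |b|))
    -- the ring of finite elements: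
    (O : Set R) (hO : O = {a : R | ∃ n : ℕ, |a| ≤ (n : R)})
    -- (A₁,B₁) and (A₂,B₂) are proper cuts of R:
    (A₁ B₁ A₂ B₂ : Set R)
    (hlt₁ : ∀ a ∈ A₁, ∀ b ∈ B₁, a < b)
    (hB₂ : B₂.Nonempty)
    (S U : Set Γ)
    (hS₁ : S = {γ : Γ | ∃ a ∈ A₁, ∃ b ∈ B₁, γ = v (b - a)})
    (hU : U = {γ : Γ | ∃ a ∈ B₁ ∩ A₂, ∃ a' ∈ B₁ ∩ A₂, a < a' ∧ γ = v (a' - a)})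
    (hSU : (S ∩ U).Nonempty) :
    ∃ f : Polynomial R, f.degree = 1 ∧
      ∃ a₁ ∈ A₁, ∃ b₁ ∈ B₁, ∃ a₂ ∈ A₂, ∃ b₂ ∈ B₂,
        (∀ c : R, a₁ < c → c < b₁ →
          0 < f.eval c ∧ f.eval c ∈ O ∧ (f.eval c)⁻¹ ∈ O) ∧
        (∀ c : R, a₂ < c → c < b₂ → f.eval c < 0) := by
  obtain ⟨γ, hγS, hγU⟩ := hSU
  rw [hS₁] at hγS
  rw [hU] at hγU
  obtain ⟨a₁, ha₁, b₁, hb₁, hγb⟩ := hγS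
  obtain ⟨a, ⟨haB, -⟩, a', ⟨-, ha'A⟩, haa', hγa⟩ := hγU
  obtain ⟨b₂, hb₂⟩ := hB₂
  have ha₁b₁ : 0 < b₁ - a₁ := sub_pos.2 (hlt₁ a₁ ha₁ b₁ hb₁)
  have haa'_pos : 0 < a' - a := sub_pos.2 haa'
  obtain ⟨n, hn⟩ := (hv_le _ _ ha₁b₁.ne' haa'_pos.ne').1 (by rw [← hγa, ← hγb])
  rw [abs_of_pos ha₁b₁, abs_of_pos haa'_pos] at hn
  set b := min a b₁
  have hbB : b ∈ B₁ := min_rec' (· ∈ B₁) haB hb₁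
  have hba' : b < a' := (min_le_left a b₁).trans_lt haa'
  have hbound : b - a₁ ≤ n * (a' - b) := calc
    b - a₁ ≤ b₁ - a₁ := by gcongr; exact min_le_right a b₁
    _ ≤ n * (a' - a) := hn
    _ ≤ n * (a' - b) := by gcongr; exact min_le_left a b₁
  refine ⟨C (-(a' - b)⁻¹) * (X - C a'), degree_C_neg_inv_mul_X_sub_C (sub_pos.2 hba').ne' a',
    a₁, ha₁, b, hbB, a', ha'A, b₂, hb₂, fun c ha₁c hcb => ?_, fun c ha'c _ => ?_⟩
  all_goals rw [eval_C_neg_inv_mul_X_sub_C]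
  · obtain ⟨h1, hle⟩ := one_lt_div_sub_and_div_sub_le hba' hbound ha₁c hcb
    have hfinite := exists_abs_le_natCast_and_abs_inv_le_natCast (n := n + 1) h1.le (mod_cast hle)
    subst hO
    exact ⟨zero_lt_one.trans h1, hfinite⟩
  · exact div_neg_of_neg_of_pos (sub_neg.2 ha'c) (sub_pos.2 hba')

/-- if the two cuts have the same lower cut `S` and `S ∩ U ≠ ∅`, there is a
degree-one polynomial which is positive with unit values on a neighbourhood of `(A₁,B₁)`
and negative on a neighbourhood of `(A₂,B₂)`. -/
theorem separating_linear_poly_of_S_inter_U_nonempty {R Γ : Type*} [Field R] [LinearOrder R] [IsStrictOrderedRing R]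
    [AddCommGroup Γ] [LinearOrder Γ] [IsOrderedAddMonoid Γ]
    -- R is real closed:
    (hsq : ∀ a : R, 0 ≤ a → ∃ b : R, b * b = a)
    (hodd : ∀ p : Polynomial R, Odd p.natDegree → ∃ x : R, p.eval x = 0)
    -- v is the natural valuation of R with value group Γ:
    (v : R → Γ)
    (hv_surj : ∀ γ : Γ, ∃ a : R, a ≠ 0 ∧ v a = γ)
    (hv_mul : ∀ a b : R, a ≠ 0 → b ≠ 0 → v (a * b) = v a + v b)
    (hv_le : ∀ a b : R, a ≠ 0 → b ≠ 0 → (v b ≤ v a ↔ ∃ n : ℕ, |a| ≤ (n : R) * |b|))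
    -- the ring of finite elements:
    (O : Set R) (hO : O = {a : R | ∃ n : ℕ, |a| ≤ (n : R)})
    -- (A₁,B₁) and (A₂,B₂) are proper cuts of R:
    (A₁ B₁ A₂ B₂ : Set R)
    (hcut₁ : A₁ ∪ B₁ = Set.univ) (hdisj₁ : A₁ ∩ B₁ = ∅)
    (hlt₁ : ∀ a ∈ A₁, ∀ b ∈ B₁, a < b)
    (hcut₂ : A₂ ∪ B₂ = Set.univ) (hdisj₂ : A₂ ∩ B₂ = ∅)
    (hlt₂ : ∀ a ∈ A₂, ∀ b ∈ B₂, a < b)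
    (hA₁ : A₁.Nonempty) (hB₁ : B₁.Nonempty) (hA₂ : A₂.Nonempty) (hB₂ : B₂.Nonempty)
    (hsub : A₁ ⊂ A₂)
    (S U : Set Γ)
    (hS₁ : S = {γ : Γ | ∃ a ∈ A₁, ∃ b ∈ B₁, γ = v (b - a)})
    (hS₂ : S = {γ : Γ | ∃ a ∈ A₂, ∃ b ∈ B₂, γ = v (b - a)})
    (hU : U = {γ : Γ | ∃ a ∈ B₁ ∩ A₂, ∃ a' ∈ B₁ ∩ A₂, a < a' ∧ γ = v (a' - a)})
    (hSU : (S ∩ U).Nonempty) :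
    ∃ f : Polynomial R, f.degree = 1 ∧
      ∃ a₁ ∈ A₁, ∃ b₁ ∈ B₁, ∃ a₂ ∈ A₂, ∃ b₂ ∈ B₂,
        (∀ c : R, a₁ < c → c < b₁ →
          0 < f.eval c ∧ f.eval c ∈ O ∧ (f.eval c)⁻¹ ∈ O) ∧
        (∀ c : R, a₂ < c → c < b₂ → f.eval c < 0) :=
  separating_linear_poly_of_S_inter_U_nonempty_general v hv_le O hO A₁ B₁ A₂ B₂ hlt₁ hB₂ S U hS₁ hU
    hSU
end

section
/- Let R be a real closed field. For every a ∈ R, the two orderings P_a⁻ and P_a⁺ of R(X) corresponding to the principal cuts ({x ∈ R : x < a}, {x ∈ R : x ≥ a}) and ({x ∈ R : x ≤ a}, {x ∈ R : x > a}) determine the same ℝ-place: λ_{P_a⁻} = λ_{P_a⁺}. Similarly, the two orderings P_∞⁻ and P_∞⁺ corresponding to the improper cuts (∅, R) and (R, ∅) determine the same ℝ-place: λ_{P_∞⁻} = λ_{P_∞⁺}. -/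
attribute [local instance] Classical.propDecidable

/-- The ordering `P_∞⁻` of `R(X)` corresponding to the improper cut `(∅, R)`. -/
def infMinusOrdering (R : Type*) [Field R] [LinearOrder R] [IsStrictOrderedRing R] : Set (RatFunc R) :=
  {f : RatFunc R | f = 0 ∨ ∃ b : R, ∀ c : R, c < b →
    Polynomial.eval c f.denom ≠ 0 ∧ 0 < RatFunc.eval (RingHom.id R) c f}

/-- The ordering `P_∞⁺` of `R(X)` corresponding to the improper cut `(R, ∅)`. -/
def infPlusOrdering (R : Type*) [Field R] [LinearOrder R] [IsStrictOrderedRing R] : Set (RatFunc R) :=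
  {f : RatFunc R | f = 0 ∨ ∃ a : R, ∀ c : R, a < c →
    Polynomial.eval c f.denom ≠ 0 ∧ 0 < RatFunc.eval (RingHom.id R) c f}


/-!
Each of the four orderings consists of the rational functions that are eventually positive along
a filter on `R`: `𝓝[<] a`, `𝓝[>] a`, `atBot`, `atTop`. Such an ordering sees `g ∈ R(X)` only
through `c ↦ g(c)` along its filter. If `g(c) → L ∈ R`, the ordering puts `g` infinitely close to
`L`, so `λ(g) = sup {q ∈ ℚ : q < L}` (or `∞` when `L` is infinitely large); if `|g(c)| → ∞`, then
`λ(g) = ∞`. On `𝓝[≠] a` every rational function has a limit or a pole, and so it has on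
`atBot ⊔ atTop` after the substitution `X ↦ 1/X`. Each pair of one-sided filters thus shares the
same limits, hence the same place.
-/

open Filter Topology Polynomial LinearOrderedField

section OrderLimit

variable {R K : Type*} [Field R] [LinearOrder R] [IsStrictOrderedRing R] [Field K] [Algebra R K]

variable (R) in
structure IsSalientOver (P : Set K) : Prop where
  eq_zero_of_mem_of_neg_mem : ∀ f ∈ P, -f ∈ P → f = 0
  algebraMap_mem : ∀ t : R, 0 < t → algebraMap R K t ∈ P

/-- `P` places `g` infinitely close to `L`. -/
def IsOrderLimit (P : Set K) (g : K) (L : R) : Prop :=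
  (∀ t < L, g - algebraMap R K t ∈ P) ∧ ∀ t > L, algebraMap R K t - g ∈ P

namespace IsOrderLimit

variable {P : Set K} {g : K} {L : R}

lemma neg (hg : IsOrderLimit P g L) : IsOrderLimit P (-g) (-L) := by
  refine ⟨fun t ht => ?_, fun t ht => ?_⟩
  · simpa [sub_eq_add_neg, add_comm] using hg.2 (-t) (by linarith)
  · simpa [sub_eq_add_neg, add_comm] using hg.1 (-t) (by linarith)

lemma le_of_sub_mem (hP : IsSalientOver R P) (hg : IsOrderLimit P g L) {t : R}
    (ht : g - algebraMap R K t ∈ P) : t ≤ L := by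
  by_contra! hLt
  obtain ⟨s, hLs, hst⟩ := exists_between hLt
  have hgt : g = algebraMap R K t :=
    sub_eq_zero.1 (hP.eq_zero_of_mem_of_neg_mem _ ht (by rw [neg_sub]; exact hg.2 t hLt))
  have hneg : algebraMap R K (s - t) ∈ P := by rw [map_sub, ← hgt]; exact hg.2 s hLs
  have hpos : -algebraMap R K (s - t) ∈ P := by
    rw [← map_neg, neg_sub]; exact hP.algebraMap_mem _ (sub_pos.2 hst)
  have := hP.eq_zero_of_mem_of_neg_mem _ hneg hpos
  rw [map_eq_zero_iff _ (algebraMap R K).injective, sub_eq_zero] at this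
  exact hst.ne this

lemma le_of_mem_sub (hP : IsSalientOver R P) (hg : IsOrderLimit P g L) {t : R}
    (ht : algebraMap R K t - g ∈ P) : L ≤ t := by
  have := hg.neg.le_of_sub_mem hP (t := -t) (by simpa [sub_eq_add_neg, add_comm] using ht)
  linarith

lemma mem_orderValRing_iff (hP : IsSalientOver R P) (hg : IsOrderLimit P g L) :
    g ∈ orderValRing P ↔ ∃ q : ℚ, |L| < q := by
  simp only [orderValRing, Set.mem_ofPred_eq, ← map_ratCast (algebraMap R K)]
  constructor
  · rintro ⟨q, -, hsub, hadd⟩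
    have hupper : L ≤ q := hg.le_of_mem_sub hP hsub
    have hlower : -(q : R) ≤ L :=
      hg.le_of_sub_mem hP (by rwa [map_neg, sub_neg_eq_add, add_comm])
    exact ⟨q + 1, by push_cast; exact (abs_le.2 ⟨hlower, hupper⟩).trans_lt (lt_add_one _)⟩
  · rintro ⟨q, hq⟩
    obtain ⟨hlower, hupper⟩ := abs_lt.1 hq
    refine ⟨q, by exact_mod_cast (abs_nonneg L).trans_lt hq, hg.2 _ hupper, ?_⟩
    simpa [sub_eq_add_neg, add_comm] using hg.1 (-(q : R)) (by linarith)

lemma sSup_sub_mem_eq (hP : IsSalientOver R P) (hg : IsOrderLimit P g L)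
    (hL : ∃ q : ℚ, |L| < q) :
    sSup {r : ℝ | ∃ q : ℚ, r = q ∧ g - (q : K) ∈ P} = sSup (cutMap ℝ L) := by
  set S := {r : ℝ | ∃ q : ℚ, r = q ∧ g - (q : K) ∈ P}
  obtain ⟨q₀, hq₀⟩ := hL
  obtain ⟨hq₀_lower, hq₀_upper⟩ := abs_lt.1 hq₀
  have hcut : cutMap ℝ L ⊆ S := by
    rintro _ ⟨q, hq, rfl⟩
    exact ⟨q, rfl, by rw [← map_ratCast (algebraMap R K)]; exact hg.1 _ hq⟩
  have hle : ∀ r ∈ S, ∃ q : ℚ, r = q ∧ (q : R) ≤ L := by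
    rintro _ ⟨q, rfl, hq⟩
    exact ⟨q, rfl, hg.le_of_sub_mem hP (by rwa [map_ratCast])⟩
  have hbdd : BddAbove S := ⟨q₀, fun r hr => by
    obtain ⟨q, rfl, hqL⟩ := hle r hr
    exact_mod_cast (show (q : R) ≤ q₀ from hqL.trans hq₀_upper.le)⟩
  have hne : (cutMap ℝ L).Nonempty :=
    ⟨_, mem_cutMap_iff.2 ⟨-q₀, by push_cast; exact hq₀_lower, rfl⟩⟩
  refine le_antisymm (csSup_le (hne.mono hcut) fun r hr => ?_) (csSup_le_csSup hbdd hne hcut)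
  obtain ⟨q, rfl, hqL⟩ := hle r hr
  refine le_of_forall_rat_lt_imp_le fun q' hq' => le_csSup (hbdd.mono hcut) ?_
  exact mem_cutMap_iff.2 ⟨q', (Rat.cast_lt.2 (by exact_mod_cast hq')).trans_le hqL, rfl⟩

theorem rPlace_eq_ite (hP : IsSalientOver R P) (hg : IsOrderLimit P g L) :
    rPlace P g = if ∃ q : ℚ, |L| < q then ((sSup (cutMap ℝ L) : ℝ) : WithTop ℝ) else ⊤ := by
  unfold rPlace
  by_cases hL : ∃ q : ℚ, |L| < q
  · rw [if_pos ((hg.mem_orderValRing_iff hP).2 hL), if_pos hL, hg.sSup_sub_mem_eq hP hL]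
  · rw [if_neg (mt (hg.mem_orderValRing_iff hP).1 hL), if_neg hL]

end IsOrderLimit

end OrderLimit

lemma Polynomial.eval_eq_eval_reverse_inv_mul_pow {K : Type*} [Field K] (p : K[X]) {c : K}
    (hc : c ≠ 0) : p.eval c = p.reverse.eval c⁻¹ * c ^ p.natDegree := by
  let := invertibleOfNonzero hc
  simpa using (eval₂_reverse_mul_pow (RingHom.id K) c p).symm

namespace RatFunc

variable {K : Type*} [Field K]

lemma eval_id_eq (g : RatFunc K) (c : K) :
    eval (RingHom.id K) c g = g.num.eval c / g.denom.eval c :=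
  rfl

-- `RatFunc.eval` is additive only where the denominators do not vanish, which along a filter
-- finer than `cofinite` is eventually everywhere.
lemma eventually_denom_eval_ne_zero {F : Filter K} (hF : F ≤ cofinite) (x : RatFunc K) :
    ∀ᶠ c in F, x.denom.eval c ≠ 0 :=
  hF (eventually_cofinite_not_isRoot x.denom_ne_zero)

lemma eventually_eval_add {F : Filter K} (hF : F ≤ cofinite) (x y : RatFunc K) :
    ∀ᶠ c in F, eval (RingHom.id K) c (x + y) =
      eval (RingHom.id K) c x + eval (RingHom.id K) c y :=
  ((eventually_denom_eval_ne_zero hF x).and (eventually_denom_eval_ne_zero hF y)).mono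
    fun _ h => eval_add _ _ h.1 h.2

lemma eventually_eval_neg {F : Filter K} (hF : F ≤ cofinite) (x : RatFunc K) :
    ∀ᶠ c in F, eval (RingHom.id K) c (-x) = -eval (RingHom.id K) c x :=
  (eventually_denom_eval_ne_zero hF x).mono fun c h => by
    rw [neg_eq_neg_one_mul, ← map_one C, ← map_neg C,
      eval_mul _ _ (by rw [denom_C]; simp) h, eval_C]
    simp

lemma eventually_eval_sub {F : Filter K} (hF : F ≤ cofinite) (x y : RatFunc K) :
    ∀ᶠ c in F, eval (RingHom.id K) c (x - y) =
      eval (RingHom.id K) c x - eval (RingHom.id K) c y :=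
  ((eventually_eval_add hF x (-y)).and (eventually_eval_neg hF y)).mono fun _ h => by
    rw [sub_eq_add_neg, h.1, h.2, sub_eq_add_neg]

end RatFunc

section LimitOrPole

variable {α R : Type*} [Field R] [LinearOrder R] [TopologicalSpace R]

def HasLimitOrPole (F : Filter α) (f : α → R) : Prop :=
  (∃ L, Tendsto f F (𝓝 L)) ∨ Tendsto (fun x => |f x|) F atTop

namespace HasLimitOrPole

variable {F G : Filter α} {f g : α → R}

lemma congr' (h : HasLimitOrPole F f) (hfg : f =ᶠ[F] g) : HasLimitOrPole F g :=
  h.imp (fun ⟨L, hL⟩ => ⟨L, hL.congr' hfg⟩) (·.congr' (hfg.fun_comp abs))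

lemma comp {β : Type*} {H : Filter β} {φ : β → α} (h : HasLimitOrPole F f)
    (hφ : Tendsto φ H F) : HasLimitOrPole H (f ∘ φ) :=
  h.imp (fun ⟨L, hL⟩ => ⟨L, hL.comp hφ⟩) (·.comp hφ)

end HasLimitOrPole

variable [IsStrictOrderedRing R] [OrderTopology R]

lemma tendsto_abs_div_atTop {l : Filter α} {f g : α → R} {b : R} (hf : Tendsto f l (𝓝 b))
    (hb : b ≠ 0) (hg : Tendsto g l (𝓝 0)) (hg₀ : ∀ᶠ x in l, g x ≠ 0) :
    Tendsto (fun x => |f x / g x|) l atTop := by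
  have habs : Tendsto (fun x => |g x|) l (𝓝[>] 0) :=
    tendsto_nhdsWithin_iff.2 ⟨by simpa using hg.abs, hg₀.mono fun _ => abs_pos.2⟩
  simpa [abs_div, div_eq_mul_inv] using
    hf.abs.pos_mul_atTop (abs_pos.2 hb) habs.inv_tendsto_nhdsGT_zero

lemma hasLimitOrPole_eval_div_eval {p q : R[X]} {a : R} (hq : q ≠ 0)
    (hpq : p.eval a ≠ 0 ∨ q.eval a ≠ 0) :
    HasLimitOrPole (𝓝[≠] a) (fun c => p.eval c / q.eval c) := by
  by_cases hqa : q.eval a = 0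
  · refine .inr (tendsto_abs_div_atTop (p.continuousAt.tendsto.mono_left nhdsWithin_le_nhds)
      (hpq.resolve_right (not_not.2 hqa)) ?_
      (nhdsNE_le_cofinite a (eventually_cofinite_not_isRoot hq)))
    simpa [hqa] using q.continuousAt.tendsto.mono_left (nhdsWithin_le_nhds (a := a) (s := {a}ᶜ))
  · exact .inl ⟨_, (p.continuousAt.div q.continuousAt hqa).tendsto.mono_left nhdsWithin_le_nhds⟩

lemma hasLimitOrPole_nhdsNE (g : RatFunc R) (a : R) :
    HasLimitOrPole (𝓝[≠] a) (fun c => RatFunc.eval (RingHom.id R) c g) := by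
  refine hasLimitOrPole_eval_div_eval g.denom_ne_zero ?_
  obtain ⟨u, v, huv⟩ := g.isCoprime_num_denom
  by_contra! h
  simpa [h.1, h.2] using congrArg (eval a) huv

lemma tendsto_inv_atBot_sup_atTop : Tendsto (fun c : R => c⁻¹) (atBot ⊔ atTop) (𝓝[≠] 0) :=
  (tendsto_inv_atBot_nhdsLT_zero.mono_right (nhdsWithin_mono _ fun _ => ne_of_lt)).sup
    (tendsto_inv_atTop_nhdsGT_zero.mono_right (nhdsWithin_mono _ fun _ => ne_of_gt))

/- With `m, n` the degrees of `num g, denom g`, `g(1/u)` is `rev num(u) · uᵏ / rev denom(u)` if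
`n = m + k` and `rev num(u) / (rev denom(u) · uᵏ)` if `m = n + k`, where `rev p (0)` is the
leading coefficient of `p`. -/
lemma hasLimitOrPole_atBot_sup_atTop (g : RatFunc R) :
    HasLimitOrPole (atBot ⊔ atTop) (fun c => RatFunc.eval (RingHom.id R) c g) := by
  have hc : ∀ᶠ c : R in atBot ⊔ atTop, c ≠ 0 :=
    eventually_sup.2 ⟨eventually_ne_atBot 0, eventually_ne_atTop 0⟩
  have hnum : g.num.reverse.eval 0 = g.num.leadingCoeff := by
    rw [← coeff_zero_eq_eval_zero, coeff_zero_reverse]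
  have hden : g.denom.reverse.eval 0 = g.denom.leadingCoeff := by
    rw [← coeff_zero_eq_eval_zero, coeff_zero_reverse]
  rcases le_or_gt g.num.natDegree g.denom.natDegree with hle | hlt
  · obtain ⟨k, hk⟩ := Nat.exists_eq_add_of_le hle
    refine ((hasLimitOrPole_eval_div_eval (p := g.num.reverse * X ^ k)
      (reverse_eq_zero.not.2 g.denom_ne_zero) (.inr ?_)).comp tendsto_inv_atBot_sup_atTop).congr'
      (hc.mono fun c hc => ?_)
    · rw [hden, leadingCoeff_ne_zero]
      exact g.denom_ne_zero
    · simp only [Function.comp, RatFunc.eval_id_eq, eval_mul, eval_pow, eval_X]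
      rw [eval_eq_eval_reverse_inv_mul_pow g.num hc, eval_eq_eval_reverse_inv_mul_pow g.denom hc,
        hk, pow_add c, ← mul_assoc, mul_right_comm _ (c ^ g.num.natDegree),
        mul_div_mul_right _ _ (pow_ne_zero _ hc)]
      ring
  · obtain ⟨k, hk⟩ := Nat.exists_eq_add_of_lt hlt
    refine ((hasLimitOrPole_eval_div_eval (p := g.num.reverse)
      (q := g.denom.reverse * X ^ (k + 1))
      (mul_ne_zero (reverse_eq_zero.not.2 g.denom_ne_zero) (pow_ne_zero _ X_ne_zero))
      (.inl ?_)).comp tendsto_inv_atBot_sup_atTop).congr' (hc.mono fun c hc => ?_)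
    · rw [hnum, leadingCoeff_ne_zero]
      rintro h
      simp [h] at hlt
    · simp only [Function.comp, RatFunc.eval_id_eq, eval_mul, eval_pow, eval_X]
      rw [eval_eq_eval_reverse_inv_mul_pow g.num hc, eval_eq_eval_reverse_inv_mul_pow g.denom hc,
        hk, add_assoc, pow_add c, mul_comm (c ^ g.denom.natDegree), ← mul_assoc,
        mul_div_mul_right _ _ (pow_ne_zero _ hc)]
      simp only [div_eq_mul_inv, mul_inv, inv_pow, inv_inv]
      ring

end LimitOrPole

section EventuallyPosCone

variable {R : Type*} [Field R] [LinearOrder R]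

/-- For `F = 𝓝[<] a, 𝓝[>] a, atBot, atTop` this is `P_a⁻, P_a⁺, P_∞⁻, P_∞⁺`. -/
def eventuallyPosCone (F : Filter R) : Set (RatFunc R) :=
  {f | f = 0 ∨ ∀ᶠ c in F, 0 < RatFunc.eval (RingHom.id R) c f}

lemma denom_eval_ne_zero_and_eval_pos_iff (f : RatFunc R) (c : R) :
    (Polynomial.eval c f.denom ≠ 0 ∧ 0 < RatFunc.eval (RingHom.id R) c f) ↔
      0 < RatFunc.eval (RingHom.id R) c f :=
  and_iff_right_of_imp fun h => RatFunc.eval₂_denom_ne_zero h.ne'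

lemma eventually_eval_nonneg_of_mem_eventuallyPosCone {F : Filter R} {f : RatFunc R}
    (hf : f ∈ eventuallyPosCone F) : ∀ᶠ c in F, 0 ≤ RatFunc.eval (RingHom.id R) c f := by
  rcases hf with rfl | hf
  · simp
  · exact hf.mono fun _ => le_of_lt

variable [IsStrictOrderedRing R]

lemma infMinusOrdering_eq_eventuallyPosCone : infMinusOrdering R = eventuallyPosCone atBot := by
  ext f
  simp only [infMinusOrdering, eventuallyPosCone, Set.mem_ofPred_eq,
    denom_eval_ne_zero_and_eval_pos_iff, atBot_basis_Iio.eventually_iff, true_and, Set.mem_Iio]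

lemma infPlusOrdering_eq_eventuallyPosCone : infPlusOrdering R = eventuallyPosCone atTop := by
  ext f
  simp only [infPlusOrdering, eventuallyPosCone, Set.mem_ofPred_eq,
    denom_eval_ne_zero_and_eval_pos_iff, atTop_basis_Ioi.eventually_iff, true_and, Set.mem_Ioi]

lemma isSalientOver_eventuallyPosCone {F : Filter R} [F.NeBot] (hF : F ≤ cofinite) :
    IsSalientOver R (eventuallyPosCone F) where
  eq_zero_of_mem_of_neg_mem f hf hnf := by
    by_contra hf0
    obtain ⟨c, hpos, hneg, heval⟩ :=
      ((hf.resolve_left hf0).and ((hnf.resolve_left (neg_ne_zero.2 hf0)).and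
        (RatFunc.eventually_eval_neg hF f))).exists
    linarith
  algebraMap_mem t ht := Or.inr (.of_forall fun c => by simpa using ht)

lemma not_mem_orderValRing_eventuallyPosCone {F : Filter R} [F.NeBot] (hF : F ≤ cofinite)
    {g : RatFunc R} (hg : Tendsto (fun c => |RatFunc.eval (RingHom.id R) c g|) F atTop) :
    g ∉ orderValRing (eventuallyPosCone F) := by
  rintro ⟨q, -, hsub, hadd⟩
  rw [← map_ratCast (RatFunc.C (K := R))] at hsub hadd
  obtain ⟨c, hsub, hadd, heval_sub, heval_add, hbig⟩ :=
    ((eventually_eval_nonneg_of_mem_eventuallyPosCone hsub).and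
      ((eventually_eval_nonneg_of_mem_eventuallyPosCone hadd).and
      ((RatFunc.eventually_eval_sub hF _ g).and ((RatFunc.eventually_eval_add hF _ g).and
      (hg.eventually_gt_atTop (q : R)))))).exists
  rw [heval_sub, RatFunc.eval_C] at hsub
  rw [heval_add, RatFunc.eval_C] at hadd
  exact hbig.not_ge (abs_le.2 ⟨by simp at hadd; linarith, by simp at hsub; linarith⟩)

variable [TopologicalSpace R] [OrderTopology R]

lemma cutOrdering_lt_le_eq_eventuallyPosCone (a : R) :
    cutOrdering {x : R | x < a} {x : R | a ≤ x} = eventuallyPosCone (𝓝[<] a) := by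
  ext f
  simp only [cutOrdering, eventuallyPosCone, Set.mem_ofPred_eq,
    denom_eval_ne_zero_and_eval_pos_iff, (nhdsLT_basis a).eventually_iff, Set.mem_Ioo]
  exact or_congr_right
    ⟨fun ⟨a', ha', b, hb, h⟩ => ⟨a', ha', fun c hc => h c hc.1 (hc.2.trans_le hb)⟩,
      fun ⟨a', ha', h⟩ => ⟨a', ha', a, le_rfl, fun c h₁ h₂ => h ⟨h₁, h₂⟩⟩⟩

lemma cutOrdering_le_lt_eq_eventuallyPosCone (a : R) :
    cutOrdering {x : R | x ≤ a} {x : R | a < x} = eventuallyPosCone (𝓝[>] a) := by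
  ext f
  simp only [cutOrdering, eventuallyPosCone, Set.mem_ofPred_eq,
    denom_eval_ne_zero_and_eval_pos_iff, (nhdsGT_basis a).eventually_iff, Set.mem_Ioo]
  exact or_congr_right
    ⟨fun ⟨b, hb, a', ha', h⟩ => ⟨a', ha', fun c hc => h c (hb.trans_lt hc.1) hc.2⟩,
      fun ⟨b, hb, h⟩ => ⟨a, le_rfl, b, hb, fun c h₁ h₂ => h ⟨h₁, h₂⟩⟩⟩

lemma isOrderLimit_eventuallyPosCone {F : Filter R} (hF : F ≤ cofinite) {g : RatFunc R} {L : R}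
    (hg : Tendsto (fun c => RatFunc.eval (RingHom.id R) c g) F (𝓝 L)) :
    IsOrderLimit (eventuallyPosCone F) g L := by
  refine ⟨fun t ht => Or.inr ?_, fun t ht => Or.inr ?_⟩
  · filter_upwards [hg.eventually_const_lt ht, RatFunc.eventually_eval_sub hF g (.C t)]
      with c hc heval
    simpa [heval] using hc
  · filter_upwards [hg.eventually_lt_const ht, RatFunc.eventually_eval_sub hF (.C t) g]
      with c hc heval
    simpa [heval] using hc

theorem rPlace_eventuallyPosCone_eq_of_le {F F₁ F₂ : Filter R} [F₁.NeBot] [F₂.NeBot]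
    (hF : F ≤ cofinite) (h₁ : F₁ ≤ F) (h₂ : F₂ ≤ F)
    (hg : ∀ g : RatFunc R, HasLimitOrPole F (fun c => RatFunc.eval (RingHom.id R) c g)) :
    rPlace (eventuallyPosCone F₁) = rPlace (eventuallyPosCone F₂) := by
  have hF₁ := h₁.trans hF
  have hF₂ := h₂.trans hF
  funext g
  rcases hg g with ⟨L, hL⟩ | hpole
  · rw [(isOrderLimit_eventuallyPosCone hF₁ (hL.mono_left h₁)).rPlace_eq_ite
        (isSalientOver_eventuallyPosCone hF₁),
      (isOrderLimit_eventuallyPosCone hF₂ (hL.mono_left h₂)).rPlace_eq_ite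
        (isSalientOver_eventuallyPosCone hF₂)]
  · rw [rPlace, rPlace,
      if_neg (not_mem_orderValRing_eventuallyPosCone hF₁ (hpole.mono_left h₁)),
      if_neg (not_mem_orderValRing_eventuallyPosCone hF₂ (hpole.mono_left h₂))]

end EventuallyPosCone

theorem principal_and_improper_cuts_same_place_general {R : Type*} [Field R] [LinearOrder R] [IsStrictOrderedRing R] :
    (∀ a : R,
      rPlace (cutOrdering {x : R | x < a} {x : R | a ≤ x}) =
        rPlace (cutOrdering {x : R | x ≤ a} {x : R | a < x})) ∧
    rPlace (infMinusOrdering R) = rPlace (infPlusOrdering R) := by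
  let := Preorder.topology R
  have : OrderTopology R := ⟨rfl⟩
  refine ⟨fun a => ?_, ?_⟩
  · rw [cutOrdering_lt_le_eq_eventuallyPosCone, cutOrdering_le_lt_eq_eventuallyPosCone]
    exact rPlace_eventuallyPosCone_eq_of_le (nhdsNE_le_cofinite a)
      (nhdsWithin_mono _ fun _ => ne_of_lt) (nhdsWithin_mono _ fun _ => ne_of_gt)
      (hasLimitOrPole_nhdsNE · a)
  · rw [infMinusOrdering_eq_eventuallyPosCone, infPlusOrdering_eq_eventuallyPosCone]
    exact rPlace_eventuallyPosCone_eq_of_le (sup_le atBot_le_cofinite atTop_le_cofinite)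
      le_sup_left le_sup_right hasLimitOrPole_atBot_sup_atTop

/-- for a real closed field `R`, the orderings `P_a⁻`, `P_a⁺` of `R(X)` given by
the two principal cuts at any `a ∈ R` determine the same ℝ-place, and the orderings `P_∞⁻`,
`P_∞⁺` given by the improper cuts `(∅,R)` and `(R,∅)` determine the same ℝ-place. -/
theorem principal_and_improper_cuts_same_place {R : Type*} [Field R] [LinearOrder R] [IsStrictOrderedRing R]
    -- R is real closed:
    (hsq : ∀ a : R, 0 ≤ a → ∃ b : R, b * b = a)
    (hodd : ∀ p : Polynomial R, Odd p.natDegree → ∃ x : R, p.eval x = 0) :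
    (∀ a : R,
      rPlace (cutOrdering {x : R | x < a} {x : R | a ≤ x}) =
        rPlace (cutOrdering {x : R | x ≤ a} {x : R | a < x})) ∧
    rPlace (infMinusOrdering R) = rPlace (infPlusOrdering R) :=
  principal_and_improper_cuts_same_place_general
end

section
/- Let k be a field, Γ a nontrivial linearly ordered abelian group, and κ the cofinality of Γ. Let k((Γ)) be the field of Hahn series over k with value group Γ (formal series a = Σ_{γ∈Γ} a_γ x^γ with well-ordered support), with valuation v(a) = min supp(a) for a ≠ 0. Let k_κ((Γ)) = {a ∈ k((Γ)) : |supp(a)| < κ, or supp(a) is cofinal in Γ of order type κ}. Then k_κ((Γ)) is complete as a uniform space with respect to the uniformity with base {V_γ : γ ∈ Γ}, where V_γ = {(a,b) : a = b or v(a−b) > γ}: every Cauchy filter (equivalently, every Cauchy net) on k_κ((Γ)) converges to an element of k_κ((Γ)). -/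
/-!
The limit of a Cauchy filter is built coefficientwise: its coefficient at `δ` is the common
coefficient at `δ` of the members of a filter set whose members pairwise agree up to `δ`.
Below any `γ` its support agrees with that of some member of `k_κ((Γ))`, and members of
`k_κ((Γ))` have fewer than `κ` support points below `γ`. A well-ordered subset of `Γ` all of
whose initial segments have cardinality `< κ` is either bounded, hence of cardinality `< κ`,
or cofinal, hence of cardinality at least `κ` and so of order type exactly `κ`.
-/

open Cardinal Set

universe u

theorem Order.cof_eq_sInf {α : Type*} [Preorder α] :
    cof α = sInf {c | ∃ s : Set α, IsCofinal s ∧ #s = c} := by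
  simp only [cof, iInf, range, Subtype.exists, exists_prop]

theorem Set.IsWF.of_forall_inter_Iic {α : Type*} [Preorder α] {s : Set α}
    (h : ∀ a ∈ s, (s ∩ Iic a).IsWF) : s.IsWF := by
  rw [isWF_iff_no_descending_seq]
  intro f hf hfs
  exact isWF_iff_no_descending_seq.1 (h _ (hfs 0)) f hf fun n => ⟨hfs n, hf.antitone n.zero_le⟩

theorem Cardinal.mk_Iio_lt_of_orderIso {β : Type u} [Preorder β] {κ : Cardinal.{u}}
    (e : β ≃o κ.ord.ToType) (x : β) : #(Iio x) < κ := by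
  rw [← mk_image_eq e.injective, e.image_Iio]
  simpa using mk_Iio_lt (e x)

theorem Cardinal.mk_inter_Iic_lt_of_orderIso {α : Type u} [LinearOrder α] [NoMaxOrder α]
    {κ : Cardinal.{u}} {s : Set α} (hs : IsCofinal s) (e : s ≃o κ.ord.ToType) (a : α) :
    #(s ∩ Iic a : Set α) < κ := by
  obtain ⟨b, hab⟩ := exists_gt a
  obtain ⟨c, hcs, hbc⟩ := hs b
  have hsub : s ∩ Iic a ⊆ Subtype.val '' Iio (⟨c, hcs⟩ : s) := fun x ⟨hxs, hxa⟩ =>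
    ⟨⟨x, hxs⟩, (hxa.trans_lt (hab.trans_le hbc) : x < c), rfl⟩
  exact (mk_le_mk_of_subset hsub).trans_lt
    ((mk_image_eq Subtype.val_injective).trans_lt (mk_Iio_lt_of_orderIso e _))

theorem Ordinal.nonempty_orderIso_ord_toType {β : Type u} [LinearOrder β] [WellFoundedLT β]
    {κ : Cardinal.{u}} (hsmall : ∀ x : β, #(Iio x) < κ) (hbig : κ ≤ #β) :
    Nonempty (β ≃o κ.ord.ToType) := by
  have htype : type ((· < ·) : β → β → Prop) = type ((· < ·) : κ.ord.ToType → _ → Prop) := by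
    rw [type_toType]
    refine le_antisymm (le_of_forall_lt fun o ho => ?_) (Cardinal.ord_le.2 hbig)
    obtain ⟨x, rfl⟩ := typein_surj _ ho
    exact Cardinal.lt_ord.2 (hsmall x)
  exact ⟨OrderIso.ofRelIsoLT (type_eq.1 htype).some⟩

theorem Set.IsWF.mk_lt_cof_or_isCofinal_and_orderIso {α : Type u} [LinearOrder α] {s : Set α}
    (hs : s.IsWF) (hsmall : ∀ a, #(s ∩ Iic a : Set α) < Order.cof α) :
    #s < Order.cof α ∨ IsCofinal s ∧ Nonempty (s ≃o (Order.cof α).ord.ToType) := by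
  by_cases hcof : IsCofinal s
  · have : WellFoundedLT s := ⟨hs⟩
    refine Or.inr ⟨hcof, Ordinal.nonempty_orderIso_ord_toType (fun x => ?_) (Order.cof_le hcof)⟩
    have hsub : Subtype.val '' Iio x ⊆ s ∩ Iic x.1 := by
      rintro _ ⟨y, hyx, rfl⟩
      exact ⟨y.2, le_of_lt hyx⟩
    exact ((mk_image_eq Subtype.val_injective).symm.trans_le (mk_le_mk_of_subset hsub)).trans_lt
      (hsmall x)
  · obtain ⟨a, ha⟩ : ∃ a, ∀ b ∈ s, b < a := by simpa [IsCofinal] using hcof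
    exact Or.inl ((mk_le_mk_of_subset fun b hb => (⟨hb, (ha b hb).le⟩ : b ∈ s ∩ Iic a)).trans_lt
      (hsmall a))

namespace HahnSeries

theorem support_inter_Iic_eq_of_coeff_eq {Γ R : Type*} [PartialOrder Γ] [Zero R]
    {a b : HahnSeries Γ R} {γ : Γ} (h : ∀ δ ≤ γ, a.coeff δ = b.coeff δ) :
    a.support ∩ Iic γ = b.support ∩ Iic γ := by
  ext δ
  simp +contextual [h]

variable {Γ R : Type*} [LinearOrder Γ] [Zero Γ] [AddGroup R]

theorem coeff_eq_of_eq_or_lt_order_sub {a b : HahnSeries Γ R} {γ δ : Γ}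
    (h : a = b ∨ γ < (a - b).order) (hδ : δ ≤ γ) : a.coeff δ = b.coeff δ := by
  rcases h with rfl | h
  · rfl
  · exact sub_eq_zero.1 (coeff_sub (x := a) (y := b) ▸ coeff_eq_zero_of_lt_order (hδ.trans_lt h))

theorem eq_or_lt_order_sub_of_coeff_eq {a b : HahnSeries Γ R} {γ : Γ}
    (h : ∀ δ ≤ γ, a.coeff δ = b.coeff δ) : a = b ∨ γ < (a - b).order := by
  refine or_iff_not_imp_right.2 fun hle => sub_eq_zero.1 (coeff_order_eq_zero.1 ?_)
  rw [coeff_sub, h _ (not_lt.1 hle), sub_self]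

theorem exists_forall_eventually_coeff_eq {F : Filter (HahnSeries Γ R)} [F.NeBot]
    (hF : ∀ γ : Γ, ∃ t ∈ F, ∀ a ∈ t, ∀ b ∈ t, a = b ∨ γ < (a - b).order) :
    ∃ l : HahnSeries Γ R, ∀ γ, ∀ᶠ b in F, ∀ δ ≤ γ, b.coeff δ = l.coeff δ := by
  choose t htF ht using hF
  choose a ha using fun γ => F.nonempty_of_mem (htF γ)
  have coherent : ∀ γ, ∀ b ∈ t γ, ∀ δ ≤ γ, b.coeff δ = (a δ).coeff δ := by
    intro γ b hb δ hδ
    obtain ⟨c, hcγ, hcδ⟩ := F.nonempty_of_mem (F.inter_mem (htF γ) (htF δ))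
    rw [coeff_eq_of_eq_or_lt_order_sub (ht γ b hb c hcγ) hδ,
      coeff_eq_of_eq_or_lt_order_sub (ht δ c hcδ (a δ) (ha δ)) le_rfl]
  let f : Γ → R := fun δ => (a δ).coeff δ
  have hsupp : ∀ γ, Function.support f ∩ Iic γ = (a γ).support ∩ Iic γ := by
    intro γ
    ext δ
    simp +contextual [f, coherent γ (a γ) (ha γ)]
  have hwf : (Function.support f).IsWF := IsWF.of_forall_inter_Iic fun γ _ =>
    hsupp γ ▸ (a γ).isWF_support.mono inter_subset_left
  exact ⟨⟨f, hwf.isPWO⟩, fun γ => Filter.mem_of_superset (htF γ) fun b hb => coherent γ b hb⟩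

end HahnSeries

/-- for a field `k` and a nontrivial linearly ordered abelian group `Γ` of
cofinality `κ`, the subfield `k_κ((Γ))` of the Hahn series field `k((Γ))` consisting of
series whose support has cardinality `< κ` or is cofinal in `Γ` of order type `κ` is
complete for the valuation uniformity: every Cauchy filter on it converges in it.
(The valuation is `v(a) = min supp(a)`, and the uniformity has base
`V_γ = {(a,b) : a = b ∨ v(a−b) > γ}`.) -/
theorem hahn_subfield_complete {k Γ : Type*} [Field k] [AddCommGroup Γ] [LinearOrder Γ] [IsOrderedAddMonoid Γ]
    [Nontrivial Γ]
    -- κ is the cofinality of Γ (the least cardinality of a cofinal subset):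
    (κ : Cardinal)
    (hκ : κ = sInf {c : Cardinal | ∃ s : Set Γ, (∀ x : Γ, ∃ y ∈ s, x ≤ y) ∧ Cardinal.mk s = c})
    -- the subfield `k_κ((Γ))`:
    (Kκ : Set (HahnSeries Γ k))
    (hKκ : Kκ = {a : HahnSeries Γ k | Cardinal.mk a.support < κ ∨
      ((∀ γ : Γ, ∃ δ ∈ a.support, γ ≤ δ) ∧ Nonempty (a.support ≃o κ.ord.ToType))})
    -- a Cauchy filter on `k_κ((Γ))`:
    (F : Filter (HahnSeries Γ k)) (hne : F.NeBot) (hmem : Kκ ∈ F)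
    (hCauchy : ∀ γ : Γ, ∃ t ∈ F, ∀ a ∈ t, ∀ b ∈ t, a = b ∨ γ < (a - b).order) :
    -- it converges to an element of `k_κ((Γ))`:
    ∃ l ∈ Kκ, ∀ γ : Γ, {b : HahnSeries Γ k | b = l ∨ γ < (b - l).order} ∈ F := by
  obtain rfl : κ = Order.cof Γ := hκ.trans Order.cof_eq_sInf.symm
  subst hKκ
  obtain ⟨l, hl⟩ := HahnSeries.exists_forall_eventually_coeff_eq hCauchy
  refine ⟨l, l.isWF_support.mk_lt_cof_or_isCofinal_and_orderIso fun γ => ?_,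
    fun γ => (hl γ).mono fun b => HahnSeries.eq_or_lt_order_sub_of_coeff_eq⟩
  obtain ⟨b, hbl, hbK⟩ := ((hl γ).and hmem).exists
  rw [← HahnSeries.support_inter_Iic_eq_of_coeff_eq hbl]
  rcases hbK with hb | ⟨hcof, ⟨e⟩⟩
  · exact (mk_le_mk_of_subset inter_subset_left).trans_lt hb
  · exact mk_inter_Iic_lt_of_orderIso hcof e γ
end

section
/- Let K be a non-Archimedean linearly ordered field (there exists x ∈ K with n < x for all n ∈ ℕ), equipped with the uniformity whose base consists of the sets V_c = {(a,b) ∈ K × K : n·|a−b| < c for all n ∈ ℕ} for c > 0 in K (this is the uniformity of the natural valuation determined by the order of K). If K is complete with respect to this uniformity (every Cauchy filter converges), then every normal cut of K is principal; that is, K is continuously closed. -/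
/-!
The intervals `[a, b]` with `a ∈ A`, `b ∈ B` generate a proper filter. By normality their lengths
become smaller than `c / x` for any `c > 0`, where `x` is infinitely large; such an interval has
diameter infinitesimal with respect to `c`, so the filter is Cauchy for the valuation uniformity.
Its limit lies within every `c > 0` of both `A` and `B`, hence it separates them, and being in
`A` or in `B` it is the maximum of `A` or the minimum of `B`.
-/

open Set Filter

section CutFilter

variable {K : Type*} [LinearOrder K] {A B : Set K}

def cutFilter (A B : Set K) : Filter K :=
  ⨅ p ∈ A ×ˢ B, 𝓟 (Icc p.1 p.2)

theorem Icc_mem_cutFilter {a b : K} (ha : a ∈ A) (hb : b ∈ B) : Icc a b ∈ cutFilter A B :=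
  mem_iInf_of_mem (a, b) <| mem_iInf_of_mem ⟨ha, hb⟩ <| mem_principal_self _

theorem hasBasis_cutFilter (hAB : (A ×ˢ B).Nonempty) :
    (cutFilter A B).HasBasis (· ∈ A ×ˢ B) fun p => Icc p.1 p.2 := by
  refine hasBasis_biInf_principal' (fun p hp q hq => ?_) hAB
  refine ⟨(max p.1 q.1, min p.2 q.2),
    ⟨max_rec' (· ∈ A) hp.1 hq.1, min_rec' (· ∈ B) hp.2 hq.2⟩, ?_, ?_⟩
  · exact Icc_subset_Icc (le_max_left _ _) (min_le_left _ _)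
  · exact Icc_subset_Icc (le_max_right _ _) (min_le_right _ _)

theorem cutFilter_neBot (hAB : (A ×ˢ B).Nonempty) (hle : ∀ a ∈ A, ∀ b ∈ B, a ≤ b) :
    (cutFilter A B).NeBot :=
  (hasBasis_cutFilter hAB).neBot_iff.2 fun hp => nonempty_Icc.2 (hle _ hp.1 _ hp.2)

end CutFilter

section Bounds

variable {K : Type*} [AddCommGroup K] [LinearOrder K] [IsOrderedAddMonoid K] {A B : Set K} {x : K}

theorem mem_upperBounds_of_forall_ball_mem_cutFilter (hAB : (A ×ˢ B).Nonempty)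
    (hle : ∀ a ∈ A, ∀ b ∈ B, a ≤ b) (hx : ∀ c > 0, {y | |x - y| < c} ∈ cutFilter A B) :
    x ∈ upperBounds A := by
  intro a ha
  refine le_of_forall_pos_lt_add fun c hc => ?_
  obtain ⟨⟨a', b'⟩, ⟨ha', hb'⟩, hsub⟩ := (hasBasis_cutFilter hAB).mem_iff.1 (hx c hc)
  have hclose : |x - max a a'| < c :=
    hsub ⟨le_max_right _ _, max_le (hle a ha b' hb') (hle a' ha' b' hb')⟩
  exact (le_max_left _ _).trans_lt (sub_lt_iff_lt_add'.1 (abs_sub_lt_iff.1 hclose).2)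

theorem mem_lowerBounds_of_forall_ball_mem_cutFilter (hAB : (A ×ˢ B).Nonempty)
    (hle : ∀ a ∈ A, ∀ b ∈ B, a ≤ b) (hx : ∀ c > 0, {y | |x - y| < c} ∈ cutFilter A B) :
    x ∈ lowerBounds B := by
  intro b hb
  refine le_of_forall_pos_lt_add fun c hc => ?_
  obtain ⟨⟨a', b'⟩, ⟨ha', hb'⟩, hsub⟩ := (hasBasis_cutFilter hAB).mem_iff.1 (hx c hc)
  have hclose : |x - min b b'| < c :=
    hsub ⟨le_min (hle a' ha' b hb) (hle a' ha' b' hb'), min_le_right _ _⟩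
  calc x < min b b' + c := sub_lt_iff_lt_add'.1 (abs_sub_lt_iff.1 hclose).1
    _ ≤ b + c := by gcongr; exact min_le_left _ _

end Bounds

section Field

variable {K : Type*} [Field K] [LinearOrder K] [IsStrictOrderedRing K]

theorem natCast_mul_abs_sub_lt {x d c y z : K} (hx : ∀ n : ℕ, (n : K) < x) (hxd : x * d < c)
    (hyz : |y - z| ≤ d) (n : ℕ) : (n : K) * |y - z| < c :=
  calc (n : K) * |y - z| ≤ x * |y - z| := by gcongr; exact (hx n).le
    _ ≤ x * d := by gcongr; simpa using (hx 0).le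
    _ < c := hxd

theorem exists_mem_cutFilter_natCast_mul_abs_sub_lt {A B : Set K} (hNA : ∃ x : K, ∀ n : ℕ, (n : K) < x)
    (hnormal : ∀ c : K, 0 < c → ∃ a ∈ A, ∃ b ∈ B, b - a < c) (c : K) (hc : 0 < c) :
    ∃ t ∈ cutFilter A B, ∀ y ∈ t, ∀ z ∈ t, ∀ n : ℕ, (n : K) * |y - z| < c := by
  obtain ⟨x, hx⟩ := hNA
  have hx₀ : 0 < x := by simpa using hx 0
  obtain ⟨a, ha, b, hb, hab⟩ := hnormal (c / x) (div_pos hc hx₀)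
  refine ⟨Icc a b, Icc_mem_cutFilter ha hb, fun y hy z hz =>
    natCast_mul_abs_sub_lt hx ?_ (abs_sub_le_of_le_of_le hy.1 hy.2 hz.1 hz.2)⟩
  rwa [← lt_div_iff₀' hx₀]

end Field

theorem complete_implies_continuously_closed_general {K : Type*} [Field K] [LinearOrder K] [IsStrictOrderedRing K]
    -- K is non-Archimedean:
    (hNA : ∃ x : K, ∀ n : ℕ, (n : K) < x)
    -- K is complete: every Cauchy filter (w.r.t. the natural valuation uniformity) converges:
    (hComplete : ∀ F : Filter K, F.NeBot →
      (∀ c : K, 0 < c → ∃ t ∈ F, ∀ a ∈ t, ∀ b ∈ t, ∀ n : ℕ, (n : K) * |a - b| < c) →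
      ∃ x : K, ∀ c : K, 0 < c → {y : K | ∀ n : ℕ, (n : K) * |x - y| < c} ∈ F)
    -- (A,B) is a normal cut of K:
    (A B : Set K)
    (hcut : A ∪ B = Set.univ)
    (hlt : ∀ a ∈ A, ∀ b ∈ B, a < b)
    (hnormal : ∀ c : K, 0 < c → ∃ a ∈ A, ∃ b ∈ B, b - a < c) :
    -- the cut is principal:
    (∃ m ∈ A, ∀ a ∈ A, a ≤ m) ∨ (∃ m ∈ B, ∀ b ∈ B, m ≤ b) := by
  obtain ⟨a₀, ha₀, b₀, hb₀, -⟩ := hnormal 1 one_pos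
  have hAB : (A ×ˢ B).Nonempty := ⟨(a₀, b₀), ha₀, hb₀⟩
  have hle : ∀ a ∈ A, ∀ b ∈ B, a ≤ b := fun a ha b hb => (hlt a ha b hb).le
  obtain ⟨x, hx⟩ := hComplete _ (cutFilter_neBot hAB hle) (exists_mem_cutFilter_natCast_mul_abs_sub_lt hNA hnormal)
  have hball : ∀ c > 0, {y | |x - y| < c} ∈ cutFilter A B := fun c hc =>
    mem_of_superset (hx c hc) fun y hy => by simpa using hy 1
  rcases (hcut.symm ▸ mem_univ x : x ∈ A ∪ B) with hxA | hxB
  · exact .inl ⟨x, hxA, mem_upperBounds_of_forall_ball_mem_cutFilter hAB hle hball⟩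
  · exact .inr ⟨x, hxB, mem_lowerBounds_of_forall_ball_mem_cutFilter hAB hle hball⟩

/-- a non-Archimedean linearly ordered field `K` which is complete with
respect to the uniformity of its natural valuation (base of entourages
`V_c = {(a,b) : n·|a−b| < c for all n ∈ ℕ}`, `c > 0`) is continuously closed:
every normal cut of `K` is principal. -/
theorem complete_implies_continuously_closed {K : Type*} [Field K] [LinearOrder K] [IsStrictOrderedRing K]
    -- K is non-Archimedean:
    (hNA : ∃ x : K, ∀ n : ℕ, (n : K) < x)
    -- K is complete: every Cauchy filter (w.r.t. the natural valuation uniformity) converges: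
    (hComplete : ∀ F : Filter K, F.NeBot →
      (∀ c : K, 0 < c → ∃ t ∈ F, ∀ a ∈ t, ∀ b ∈ t, ∀ n : ℕ, (n : K) * |a - b| < c) →
      ∃ x : K, ∀ c : K, 0 < c → {y : K | ∀ n : ℕ, (n : K) * |x - y| < c} ∈ F)
    -- (A,B) is a normal cut of K:
    (A B : Set K)
    (hcut : A ∪ B = Set.univ) (hdisj : A ∩ B = ∅)
    (hlt : ∀ a ∈ A, ∀ b ∈ B, a < b)
    (hA : A.Nonempty) (hB : B.Nonempty)
    (hnormal : ∀ c : K, 0 < c → ∃ a ∈ A, ∃ b ∈ B, b - a < c) :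
    -- the cut is principal:
    (∃ m ∈ A, ∀ a ∈ A, a ≤ m) ∨ (∃ m ∈ B, ∀ b ∈ B, m ≤ b) :=
  complete_implies_continuously_closed_general hNA hComplete A B hcut hlt hnormal
end

section
/- Let ℝ_{ℵ₀}((ℚ)) = {a ∈ ℝ((ℚ)) : supp(a) is finite, or supp(a) is cofinal in ℚ of order type ω}, a subfield of the Hahn series field ℝ((ℚ)), ordered by the lexicographic order (a > 0 iff its coefficient at γ = min supp(a) is positive). Then ℝ_{ℵ₀}((ℚ)) is continuously closed: every normal cut of the ordered field ℝ_{ℵ₀}((ℚ)) is principal. -/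
/-- The subfield `ℝ_{ℵ₀}((ℚ))` of the Hahn series field `ℝ((ℚ))`: series whose support
is finite or cofinal in `ℚ` of order type `ω`. -/
def RAlephZero : Set (HahnSeries ℚ ℝ) :=
  {a : HahnSeries ℚ ℝ | a.support.Finite ∨
    ((∀ q : ℚ, ∃ r ∈ a.support, q ≤ r) ∧ Nonempty (a.support ≃o ℕ))}

/-- The lexicographic positivity of a Hahn series: `a > 0` iff the coefficient at
`min supp(a)` is positive. -/
def HSPos (a : HahnSeries ℚ ℝ) : Prop := a ≠ 0 ∧ 0 < a.coeff a.order

/-- The lexicographic strict order on Hahn series: `a < b` iff `b − a` is positive. -/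
def HSLt (a b : HahnSeries ℚ ℝ) : Prop := HSPos (b - a)

/-- The lexicographic order on Hahn series. -/
def HSLe (a b : HahnSeries ℚ ℝ) : Prop := a = b ∨ HSLt a b

/-!
`HSPos` is positivity for Mathlib's lexicographic order on `Lex ℝ⟦ℚ⟧`, so the argument takes
place in that ordered field, where `|x| < |y|` forces `orderTop y ≤ orderTop x`.

Normality yields, for each `q : ℚ`, some `a q ∈ A` and `b q ∈ B` with `0 < b q - a q < x^q`.
Any two `a q`, `a q'` then agree below `min q q'`, so they glue to one series `c` agreeing with
`a q` and with `b q` below `q`. Membership in `ℝ_{ℵ₀}((ℚ))` means that the support has finite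
initial segments, and this passes from the `a q` to `c`. If `c ∈ A` and `c < x ∈ A`, pick `q`
above the order of `x - c`: then `b q - c` has larger order than `x - c`, hence is smaller, so
`b q < x`, which is absurd. The case `c ∈ B` is symmetric.
-/

open Set

section FiniteInitialSegments

variable {α : Type*} [LinearOrder α] {S : Set α}

theorem Set.isWF_of_finite_inter_Iio (h : ∀ a, (S ∩ Iio a).Finite) : S.IsWF := by
  rw [isWF_iff_no_descending_seq]
  intro f hf hmem
  exact infinite_of_injective_forall_mem (s := S ∩ Iio (f 0)) (f := fun n => f (n + 1))
    (hf.injective.comp (add_left_injective 1)) (fun n => ⟨hmem _, hf n.succ_pos⟩) (h (f 0))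

theorem Set.nonempty_orderIso_nat_of_finite_inter_Iio (hinf : S.Infinite)
    (h : ∀ a, (S ∩ Iio a).Finite) : Nonempty (S ≃o ℕ) := by
  have hIic (s : S) : (Iic s).Finite := by
    rw [← Iio_insert]
    exact (((h s).preimage Subtype.val_injective.injOn).subset fun t ht => ⟨t.2, ht⟩).insert s
  have : Infinite S := hinf.to_subtype
  let : LocallyFiniteOrder S := .ofFiniteIcc fun a b => (hIic b).subset Icc_subset_Iic_self
  let := LinearLocallyFiniteOrder.succOrder S
  let := LinearLocallyFiniteOrder.predOrder S
  have : NoMaxOrder S := ⟨fun a => by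
    by_contra! ha
    exact infinite_univ ((hIic a).subset fun b _ => ha b)⟩
  have : WellFoundedLT S := ⟨isWF_of_finite_inter_Iio h⟩
  let := WellFoundedLT.toOrderBot S
  exact ⟨orderIsoNatOfLinearSuccPredArch⟩

end FiniteInitialSegments

namespace HahnSeries

section Glue

variable {Γ R : Type*} [LinearOrder Γ] [AddGroup R]

theorem coeff_eq_of_le_orderTop_sub {x y : HahnSeries Γ R} {g r : Γ}
    (h : ↑g ≤ (x - y).orderTop) (hr : r < g) : x.coeff r = y.coeff r := by
  rw [← sub_eq_zero, ← coeff_sub]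
  exact le_orderTop_iff_forall.1 h r (WithTop.coe_lt_coe.2 hr)

theorem exists_forall_le_orderTop_sub [NoMaxOrder Γ] (a : Γ → HahnSeries Γ R)
    (ha : ∀ g g', ↑(min g g') ≤ (a g - a g').orderTop) :
    ∃ c : HahnSeries Γ R, ∀ g, ↑g ≤ (a g - c).orderTop := by
  choose up hup using fun g : Γ => exists_gt g
  let f r := (a (up r)).coeff r
  have hf (g r : Γ) (h : r < g) : f r = (a g).coeff r :=
    coeff_eq_of_le_orderTop_sub (ha _ _) (lt_min (hup r) h)
  have hwf : (Function.support f).IsWF := by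
    rw [isWF_iff_no_descending_seq]
    intro u hu hmem
    refine isWF_iff_no_descending_seq.1 (a (up (u 0))).isWF_support u hu fun n => ?_
    rw [mem_support, ← hf _ _ ((hu.antitone n.zero_le).trans_lt (hup _))]
    exact hmem n
  refine ⟨⟨f, hwf.isPWO⟩, fun g => le_orderTop_iff_forall.2 fun r hr => ?_⟩
  rw [coeff_sub, sub_eq_zero]
  exact (hf g r (WithTop.coe_lt_coe.1 hr)).symm

end Glue

section Lex

variable {Γ R : Type*} [LinearOrder Γ] [LinearOrder R] [AddCommGroup R]

theorem toLex_single_pos {g : Γ} {r : R} (hr : 0 < r) : 0 < toLex (single g r) :=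
  leadingCoeff_pos_iff.1 (by rwa [ofLex_toLex, leadingCoeff_of_single])

variable [IsOrderedAddMonoid R]

theorem lt_of_orderTop_ofLex_lt {x y : Lex (HahnSeries Γ R)} (hx : 0 ≤ x) (hy : 0 ≤ y)
    (h : (ofLex x).orderTop < (ofLex y).orderTop) : y < x := by
  simpa only [abs_of_nonneg hx, abs_of_nonneg hy] using abs_lt_abs_of_orderTop_ofLex h

theorem orderTop_ofLex_le_of_abs_lt {x y : Lex (HahnSeries Γ R)} (h : |x| < |y|) :
    (ofLex y).orderTop ≤ (ofLex x).orderTop :=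
  not_lt.1 fun h' => lt_asymm h (abs_lt_abs_of_orderTop_ofLex h')

theorem toLex_single_le_toLex_single {g g' : Γ} {r : R} (hr : 0 < r) (h : g ≤ g') :
    toLex (single g' r) ≤ toLex (single g r) := by
  rcases h.eq_or_lt with rfl | h
  · rfl
  · refine (lt_of_orderTop_ofLex_lt (toLex_single_pos hr).le (toLex_single_pos hr).le ?_).le
    simpa only [ofLex_toLex, orderTop_single hr.ne', WithTop.coe_lt_coe] using h

theorem le_orderTop_of_abs_lt_toLex_single {x : Lex (HahnSeries Γ R)} {g : Γ} {r : R}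
    (hr : 0 < r) (h : |x| < toLex (single g r)) : ↑g ≤ (ofLex x).orderTop := by
  rw [← abs_of_pos (toLex_single_pos hr)] at h
  simpa only [ofLex_toLex, orderTop_single hr.ne'] using orderTop_ofLex_le_of_abs_lt h

theorem le_orderTop_sub_of_lt_of_sub_lt {a a' b b' : Lex (HahnSeries Γ R)} {g g' : Γ} {r : R}
    (hr : 0 < r) (hab' : a < b') (ha'b : a' < b) (hb : b - a < toLex (single g r))
    (hb' : b' - a' < toLex (single g' r)) : ↑(min g g') ≤ (ofLex (a - a')).orderTop := by
  refine le_orderTop_of_abs_lt_toLex_single hr (abs_sub_lt_iff.2 ⟨?_, ?_⟩)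
  · calc a - a' < b' - a' := sub_lt_sub_right hab' a'
      _ < toLex (single g' r) := hb'
      _ ≤ toLex (single (min g g') r) := toLex_single_le_toLex_single hr (min_le_right g g')
  · calc a' - a < b - a := sub_lt_sub_right ha'b a
      _ < toLex (single g r) := hb
      _ ≤ toLex (single (min g g') r) := toLex_single_le_toLex_single hr (min_le_left g g')

theorem ge_of_forall_lt_of_le_orderTop_sub [NoMaxOrder Γ] {x c : Lex (HahnSeries Γ R)}
    {b : Γ → Lex (HahnSeries Γ R)} (hb : ∀ g, ↑g ≤ (ofLex (b g - c)).orderTop)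
    (hxb : ∀ g, x < b g) : x ≤ c := by
  by_contra! hcx
  have hne : ofLex (x - c) ≠ 0 := sub_ne_zero.2 hcx.ne'
  obtain ⟨g, hg⟩ := exists_gt ((ofLex (x - c)).orderTop.untop (orderTop_ne_top.2 hne))
  have hlt : (ofLex (x - c)).orderTop < (ofLex (b g - c)).orderTop :=
    ((WithTop.untop_lt_iff _).1 hg).trans_le (hb g)
  have := lt_of_orderTop_ofLex_lt (sub_nonneg.2 hcx.le) (sub_nonneg.2 (hcx.trans (hxb g)).le) hlt
  exact (hxb g).not_ge ((sub_le_sub_iff_right c).1 this.le)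

theorem le_of_forall_gt_of_le_orderTop_sub [NoMaxOrder Γ] {x c : Lex (HahnSeries Γ R)}
    {a : Γ → Lex (HahnSeries Γ R)} (ha : ∀ g, ↑g ≤ (ofLex (a g - c)).orderTop)
    (hax : ∀ g, a g < x) : c ≤ x := by
  refine neg_le_neg_iff.1 (ge_of_forall_lt_of_le_orderTop_sub (b := fun g => -a g) (fun g => ?_)
    fun g => neg_lt_neg (hax g))
  rw [neg_sub_neg, ← neg_sub, ofLex_neg, orderTop_neg]
  exact ha g

end Lex

end HahnSeries

theorem hsPos_iff_pos_toLex {a : HahnSeries ℚ ℝ} : HSPos a ↔ 0 < toLex a := by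
  rw [← HahnSeries.leadingCoeff_pos_iff, ofLex_toLex, HahnSeries.leadingCoeff_eq, HSPos]
  exact and_iff_right_of_imp fun h => HahnSeries.ne_zero_of_coeff_ne_zero h.ne'

theorem hsLt_iff_toLex_lt {a b : HahnSeries ℚ ℝ} : HSLt a b ↔ toLex a < toLex b := by
  rw [HSLt, hsPos_iff_pos_toLex, toLex_sub, sub_pos]

theorem hsLe_iff_toLex_le {a b : HahnSeries ℚ ℝ} : HSLe a b ↔ toLex a ≤ toLex b := by
  rw [HSLe, hsLt_iff_toLex_lt, le_iff_eq_or_lt, toLex_inj]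

theorem mem_RAlephZero_iff {a : HahnSeries ℚ ℝ} :
    a ∈ RAlephZero ↔ ∀ q, (a.support ∩ Iio q).Finite := by
  constructor
  · rintro (hfin | ⟨hcof, ⟨e⟩⟩) q
    · exact hfin.subset inter_subset_left
    · obtain ⟨r, hr, hqr⟩ := hcof q
      refine (((finite_Iio (e ⟨r, hr⟩)).preimage e.injective.injOn).image Subtype.val).subset ?_
      exact fun s ⟨hs, hsq⟩ => ⟨⟨s, hs⟩, e.lt_iff_lt.2 (Subtype.mk_lt_mk.2 (hsq.trans_le hqr)), rfl⟩
  · intro h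
    by_cases hfin : a.support.Finite
    · exact Or.inl hfin
    refine Or.inr ⟨fun q => ?_, nonempty_orderIso_nat_of_finite_inter_Iio hfin h⟩
    by_contra! hq
    exact hfin ((h q).subset fun r hr => ⟨hr, hq r hr⟩)

theorem single_mem_RAlephZero (q : ℚ) : HahnSeries.single q (1 : ℝ) ∈ RAlephZero :=
  Or.inl ((finite_singleton q).subset HahnSeries.support_single_subset)

theorem mem_RAlephZero_of_le_orderTop_sub {a : ℚ → HahnSeries ℚ ℝ} {c : HahnSeries ℚ ℝ}
    (ha : ∀ q, a q ∈ RAlephZero) (hc : ∀ q, ↑q ≤ (a q - c).orderTop) : c ∈ RAlephZero := by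
  refine mem_RAlephZero_iff.2 fun q => (mem_RAlephZero_iff.1 (ha q) q).subset ?_
  rintro r ⟨hr, hrq⟩
  rwa [mem_inter_iff, HahnSeries.mem_support, HahnSeries.coeff_eq_of_le_orderTop_sub (hc q) hrq,
    and_iff_left hrq]

theorem RAlephZero_continuously_closed_general
    -- (A,B) is a proper cut of `ℝ_{ℵ₀}((ℚ))`:
    (A B : Set (HahnSeries ℚ ℝ))
    (hcut : A ∪ B = RAlephZero)
    (hlt : ∀ a ∈ A, ∀ b ∈ B, HSLt a b)
    -- the cut is normal:
    (hnormal : ∀ c ∈ RAlephZero, HSPos c → ∃ a ∈ A, ∃ b ∈ B, HSLt (b - a) c) :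
    -- the cut is principal:
    (∃ m ∈ A, ∀ a ∈ A, HSLe a m) ∨ (∃ m ∈ B, ∀ b ∈ B, HSLe m b) := by
  simp only [hsLt_iff_toLex_lt, hsPos_iff_pos_toLex, hsLe_iff_toLex_le, toLex_sub] at hlt hnormal ⊢
  choose a ha b hb hclose using fun q : ℚ =>
    hnormal _ (single_mem_RAlephZero q) (HahnSeries.toLex_single_pos one_pos)
  have hba (q : ℚ) : ↑q ≤ (b q - a q).orderTop := by
    refine HahnSeries.le_orderTop_of_abs_lt_toLex_single (x := toLex (b q - a q)) one_pos ?_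
    rw [toLex_sub, abs_of_pos (sub_pos.2 (hlt _ (ha q) _ (hb q)))]
    exact hclose q
  obtain ⟨c, hac⟩ := HahnSeries.exists_forall_le_orderTop_sub a fun q q' =>
    HahnSeries.le_orderTop_sub_of_lt_of_sub_lt one_pos (hlt _ (ha q) _ (hb q'))
      (hlt _ (ha q') _ (hb q)) (hclose q) (hclose q')
  have hbc (q : ℚ) : ↑q ≤ (b q - c).orderTop := by
    rw [← sub_add_sub_cancel (b q) (a q) c]
    exact (le_min (hba q) (hac q)).trans HahnSeries.min_orderTop_le_orderTop_add
  have hc : c ∈ A ∪ B :=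
    hcut ▸ mem_RAlephZero_of_le_orderTop_sub (fun q => hcut ▸ Or.inl (ha q)) hac
  rcases hc with hcA | hcB
  · exact Or.inl ⟨c, hcA, fun x hx => HahnSeries.ge_of_forall_lt_of_le_orderTop_sub
      (b := fun q => toLex (b q)) hbc fun q => hlt x hx _ (hb q)⟩
  · exact Or.inr ⟨c, hcB, fun x hx => HahnSeries.le_of_forall_gt_of_le_orderTop_sub
      (a := fun q => toLex (a q)) hac fun q => hlt _ (ha q) x hx⟩

/-- the ordered field `ℝ_{ℵ₀}((ℚ))` (with the lexicographic order) is
continuously closed: every normal cut of it is principal. -/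
theorem RAlephZero_continuously_closed
    -- (A,B) is a proper cut of `ℝ_{ℵ₀}((ℚ))`:
    (A B : Set (HahnSeries ℚ ℝ))
    (hcut : A ∪ B = RAlephZero) (hdisj : A ∩ B = ∅)
    (hlt : ∀ a ∈ A, ∀ b ∈ B, HSLt a b)
    (hA : A.Nonempty) (hB : B.Nonempty)
    -- the cut is normal:
    (hnormal : ∀ c ∈ RAlephZero, HSPos c → ∃ a ∈ A, ∃ b ∈ B, HSLt (b - a) c) :
    -- the cut is principal:
    (∃ m ∈ A, ∀ a ∈ A, HSLe a m) ∨ (∃ m ∈ B, ∀ b ∈ B, HSLe m b) :=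
  RAlephZero_continuously_closed_general A B hcut hlt hnormal
end

section
/- Let R be a real closed field containing ℝ and an element x transcendental over ℝ such that R is algebraic over the subfield ℝ(x) (i.e. R is a real closure of the rational function field ℝ(X)). Then the space M(R(Y)) of ℝ-places of the rational function field R(Y), equipped with the quotient topology induced from the Harrison topology on the space of orderings of R(Y), is not metrizable. -/
attribute [local instance] Classical.propDecidable

/-- The space of orderings of `K` with the Harrison topology. -/
def OrderSpace (K : Type*) [Field K] : Type _ := {P : Set K // IsOrdering P}

instance (K : Type*) [Field K] : TopologicalSpace (OrderSpace K) :=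
  TopologicalSpace.generateFrom
    {s : Set (OrderSpace K) | ∃ a : K, a ≠ 0 ∧ s = {P : OrderSpace K | a ∈ P.1}}

/-- The space `M(K)` of ℝ-places of `K`. -/
def PlaceSpace (K : Type*) [Field K] : Type _ :=
  {φ : K → WithTop ℝ // ∃ P : Set K, IsOrdering P ∧ φ = rPlace P}

/-- The canonical surjection `λ : X(K) → M(K)`, `P ↦ λ_P`. -/
noncomputable def lambdaMap (K : Type*) [Field K] : OrderSpace K → PlaceSpace K :=
  fun P => ⟨rPlace P.1, P.1, P.2, rfl⟩

/-- `M(K)` carries the quotient topology induced by `λ`. -/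
noncomputable instance (K : Type*) [Field K] : TopologicalSpace (PlaceSpace K) :=
  TopologicalSpace.coinduced (lambdaMap K) inferInstance

/-!
Since `x ∉ ℝ`, the field `R` is not archimedean (an archimedean `R` would embed in `ℝ` over `ℝ`),
so it contains a positive `ι` below every positive real. For `t ∈ ℝ` put
`g_t = 1 / (1 + ((Y - t) / ι)²)` and `U_t = {λ ∈ M(R(Y)) : λ(g_t) > 1/2}`. Each `U_t` is open, and
nonempty: in the ordering where `Y` is infinitesimally larger than `t` (read off the Laurent
expansion at `t`), `g_t` is close to `1`. If `λ_P(g_s), λ_P(g_t) > 1/2` then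
`((Y - s) / ι)², ((Y - t) / ι)² ≤ 1` in `P`, hence `((s - t) / ι)² ≤ 4` in `P`; as `P` induces
the unique ordering of the real closed field `R`, this contradicts `|s - t| > 2ι`. So the `U_t`
are uncountably many disjoint nonempty open sets, which a compact metrizable, hence separable,
space cannot contain; `M(R(Y))` is compact as a continuous image of the compact Harrison space.
-/

open Function Polynomial HahnSeries

namespace IsOrdering

variable {K : Type*} [Field K] {P : Set K}

theorem add_mem (hP : IsOrdering P) {a b : K} (ha : a ∈ P) (hb : b ∈ P) : a + b ∈ P :=
  hP.1 a ha b hb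

theorem mul_mem (hP : IsOrdering P) {a b : K} (ha : a ∈ P) (hb : b ∈ P) : a * b ∈ P :=
  hP.2.1 a ha b hb

theorem mem_or_neg_mem (hP : IsOrdering P) (a : K) : a ∈ P ∨ -a ∈ P :=
  hP.2.2.1 a

theorem eq_zero_of_mem_of_neg_mem (hP : IsOrdering P) {a : K} (ha : a ∈ P) (hna : -a ∈ P) :
    a = 0 :=
  hP.2.2.2 a ha hna

theorem mul_self_mem (hP : IsOrdering P) (a : K) : a * a ∈ P := by
  rcases hP.mem_or_neg_mem a with ha | ha
  · exact hP.mul_mem ha ha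
  · simpa using hP.mul_mem ha ha

theorem one_mem (hP : IsOrdering P) : (1 : K) ∈ P := by
  simpa using hP.mul_self_mem 1

theorem inv_mem (hP : IsOrdering P) {a : K} (ha : a ∈ P) : a⁻¹ ∈ P := by
  have : a⁻¹ = a * (a⁻¹ * a⁻¹) := by
    rcases eq_or_ne a 0 with rfl | h0
    · simp
    · field_simp
  rw [this]
  exact hP.mul_mem ha (hP.mul_self_mem a⁻¹)

theorem natCast_mem (hP : IsOrdering P) (n : ℕ) : (n : K) ∈ P := by
  induction n with
  | zero => simpa using hP.mul_self_mem 0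
  | succ n ih => simpa using hP.add_mem ih hP.one_mem

theorem ratCast_mem (hP : IsOrdering P) {q : ℚ} (hq : 0 ≤ q) : (q : K) ∈ P := by
  obtain ⟨n, hn⟩ := Int.eq_ofNat_of_zero_le (Rat.num_nonneg.2 hq)
  rw [Rat.cast_def, hn, div_eq_mul_inv]
  exact_mod_cast hP.mul_mem (hP.natCast_mem n) (hP.inv_mem (hP.natCast_mem q.den))

theorem one_add_mul_self_ne_zero (hP : IsOrdering P) (a : K) : 1 + a * a ≠ 0 := by
  intro h
  have h1 : -1 ∈ P := eq_neg_of_add_eq_zero_right h ▸ hP.mul_self_mem a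
  exact one_ne_zero (hP.eq_zero_of_mem_of_neg_mem hP.one_mem h1)

theorem le_of_sub_mem [CharZero K] (hP : IsOrdering P) {g : K} {q₀ q : ℚ}
    (hq₀ : (q₀ : K) - g ∈ P) (hq : g - q ∈ P) : q ≤ q₀ := by
  by_contra! hlt
  have hpos : ((q₀ - q : ℚ) : K) ∈ P := by simpa using hP.add_mem hq₀ hq
  have hneg : -((q₀ - q : ℚ) : K) ∈ P := by
    simpa using hP.ratCast_mem (sub_nonneg.2 hlt.le)
  have := hP.eq_zero_of_mem_of_neg_mem hpos hneg
  norm_cast at this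
  linarith

theorem map_mem_of_nonneg {R : Type*} [Semiring R] [LE R]
    (hsq : ∀ a : R, 0 ≤ a → ∃ b : R, b * b = a) (hP : IsOrdering P) (f : R →+* K) {a : R}
    (ha : 0 ≤ a) : f a ∈ P := by
  obtain ⟨b, rfl⟩ := hsq a ha
  simpa using hP.mul_self_mem (f b)

theorem inv_one_add_mul_self_mem_orderValRing (hP : IsOrdering P) (h : K) :
    (1 + h * h)⁻¹ ∈ orderValRing P := by
  have hg : (1 + h * h)⁻¹ ∈ P := hP.inv_mem (hP.add_mem hP.one_mem (hP.mul_self_mem h))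
  refine ⟨1, one_pos, ?_, by simpa using hP.add_mem hP.one_mem hg⟩
  rw [Rat.cast_one]
  convert hP.mul_mem (hP.mul_self_mem h) hg using 1
  rw [show h * h * (1 + h * h)⁻¹ = (1 + h * h) * (1 + h * h)⁻¹ - (1 + h * h)⁻¹ by ring,
    mul_inv_cancel₀ (hP.one_add_mul_self_ne_zero h)]

theorem four_sub_mul_self_sub_mem (hP : IsOrdering P) {a b : K} (ha : 1 - a * a ∈ P)
    (hb : 1 - b * b ∈ P) : 4 - (b - a) * (b - a) ∈ P := by
  have := hP.add_mem (hP.add_mem (hP.add_mem ha ha) (hP.add_mem hb hb)) (hP.mul_self_mem (a + b))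
  convert this using 1
  ring

theorem sub_ne_map_of_four_lt_mul_self {R : Type*} [Field R] [LinearOrder R]
    [IsStrictOrderedRing R] (hsq : ∀ a : R, 0 ≤ a → ∃ b : R, b * b = a) (hP : IsOrdering P)
    (f : R →+* K) {a b : K} (ha : 1 - a * a ∈ P) (hb : 1 - b * b ∈ P) {u : R}
    (hu : 4 < u * u) : b - a ≠ f u := by
  intro hba
  have hle : -f (u * u - 4) ∈ P := by
    convert hP.four_sub_mul_self_sub_mem ha hb using 1
    rw [hba, map_sub, map_mul, map_ofNat]
    ring
  have hge : f (u * u - 4) ∈ P := hP.map_mem_of_nonneg hsq f (by linarith)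
  have := (map_eq_zero f).1 (hP.eq_zero_of_mem_of_neg_mem hge hle)
  linarith

end IsOrdering

theorem isOrdering_setOf_nonneg_map {K L : Type*} [Field K] [Field L] [LinearOrder L]
    [IsStrictOrderedRing L] (φ : K →+* L) : IsOrdering {a : K | 0 ≤ φ a} := by
  refine ⟨fun a ha b hb => ?_, fun a ha b hb => ?_, fun a => ?_, fun a ha hna => ?_⟩
  · simpa using add_nonneg ha hb
  · simpa using mul_nonneg ha hb
  · simpa using le_total 0 (φ a)
  · simp only [Set.mem_ofPred_eq, map_neg, neg_nonneg] at ha hna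
    exact φ.injective (by simpa using le_antisymm hna ha)

section HarrisonTopology

variable {K : Type*} [Field K]

theorem isOpen_setOf_mem (a : K) : IsOpen {P : OrderSpace K | a ∈ P.1} := by
  by_cases ha : a = 0
  · convert isOpen_univ
    exact Set.eq_univ_of_forall fun P => by simpa [ha] using P.2.mul_self_mem 0
  · exact TopologicalSpace.GenerateOpen.basic _ ⟨a, ha, rfl⟩

/-- The ultrafilter limit of a family of orderings is the set of elements lying in almost all of
them. -/
instance : CompactSpace (OrderSpace K) := by
  refine ⟨isCompact_iff_ultrafilter_le_nhds.2 fun 𝒰 _ => ?_⟩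
  let P : Set K := {a | {Q : OrderSpace K | a ∈ Q.1} ∈ 𝒰}
  have hP : IsOrdering P := by
    refine ⟨fun a ha b hb => ?_, fun a ha b hb => ?_, fun a => ?_, fun a ha hna => ?_⟩
    · exact 𝒰.mem_of_superset (Filter.inter_mem ha hb) fun Q hQ => Q.2.add_mem hQ.1 hQ.2
    · exact 𝒰.mem_of_superset (Filter.inter_mem ha hb) fun Q hQ => Q.2.mul_mem hQ.1 hQ.2
    · exact Ultrafilter.union_mem_iff.1 (Filter.univ_mem' fun Q => Q.2.mem_or_neg_mem a)
    · obtain ⟨Q, hQ⟩ := 𝒰.nonempty_of_mem (Filter.inter_mem ha hna)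
      exact Q.2.eq_zero_of_mem_of_neg_mem hQ.1 hQ.2
  refine ⟨(⟨P, hP⟩ : OrderSpace K), Set.mem_univ _, ?_⟩
  refine (TopologicalSpace.tendsto_nhds_generateFrom_iff (m := id)).2 ?_
  rintro _ ⟨a, -, rfl⟩ ha
  exact ha

theorem lambdaMap_surjective : Function.Surjective (lambdaMap K) := by
  rintro ⟨_, P, hP, rfl⟩
  exact ⟨⟨P, hP⟩, rfl⟩

instance : CompactSpace (PlaceSpace K) :=
  lambdaMap_surjective.compactSpace continuous_coinduced_rng

end HarrisonTopology

section Places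

variable {K : Type*} [Field K] [CharZero K] {P : Set K}

theorem coe_lt_rPlace_iff (hP : IsOrdering P) {g : K} (hg : g ∈ orderValRing P) (r : ℝ) :
    (r : WithTop ℝ) < rPlace P g ↔ ∃ q : ℚ, r < q ∧ g - q ∈ P := by
  obtain ⟨q₀, hq₀pos, hq₀, hq₀'⟩ := hg
  have hbdd : BddAbove {r : ℝ | ∃ q : ℚ, r = q ∧ g - q ∈ P} := by
    refine ⟨q₀, ?_⟩
    rintro _ ⟨q, rfl, hq⟩
    exact_mod_cast hP.le_of_sub_mem hq₀ hq
  have hne : {r : ℝ | ∃ q : ℚ, r = q ∧ g - q ∈ P}.Nonempty :=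
    ⟨_, -q₀, rfl, by simpa [add_comm] using hq₀'⟩
  rw [rPlace, if_pos ⟨q₀, hq₀pos, hq₀, hq₀'⟩, WithTop.coe_lt_coe, lt_csSup_iff hbdd hne]
  constructor
  · rintro ⟨_, ⟨q, rfl, hq⟩, hrq⟩
    exact ⟨q, hrq, hq⟩
  · rintro ⟨q, hrq, hq⟩
    exact ⟨q, ⟨q, rfl, hq⟩, hrq⟩

theorem isOpen_setOf_coe_lt_apply {g : K} (hg : ∀ P, IsOrdering P → g ∈ orderValRing P)
    (r : ℝ) : IsOpen {φ : PlaceSpace K | (r : WithTop ℝ) < φ.1 g} := by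
  rw [isOpen_coinduced]
  have : lambdaMap K ⁻¹' {φ | (r : WithTop ℝ) < φ.1 g} =
      ⋃ (q : ℚ) (_ : r < q), {P : OrderSpace K | g - q ∈ P.1} := by
    ext P
    simpa [lambdaMap] using coe_lt_rPlace_iff P.2 (hg P.1 P.2) r
  rw [this]
  exact isOpen_iUnion fun q => isOpen_iUnion fun _ => isOpen_setOf_mem _

theorem IsOrdering.one_sub_mul_self_mem_of_half_lt_rPlace (hP : IsOrdering P) {h : K}
    (hh : ((1 / 2 : ℝ) : WithTop ℝ) < rPlace P (1 + h * h)⁻¹) : 1 - h * h ∈ P := by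
  obtain ⟨q, hq, hg⟩ :=
    (coe_lt_rPlace_iff hP (hP.inv_one_add_mul_self_mem_orderValRing h) _).1 hh
  replace hq : 1 / 2 < q := by
    rw [← Rat.cast_lt (K := ℝ)]
    simpa using hq
  have hq1 : (q : K)⁻¹ * q = 1 := inv_mul_cancel₀ (by exact_mod_cast (by linarith : q ≠ 0))
  have hg1 : (1 + h * h)⁻¹ * (1 + h * h) = 1 := inv_mul_cancel₀ (hP.one_add_mul_self_ne_zero h)
  have := hP.mul_mem (hP.ratCast_mem (inv_nonneg.2 (by linarith : (0 : ℚ) ≤ q)))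
    (hP.add_mem (hP.mul_mem hg (hP.add_mem hP.one_mem (hP.mul_self_mem h)))
      (hP.ratCast_mem (by linarith : (0 : ℚ) ≤ 2 * q - 1)))
  convert this using 1
  push_cast
  linear_combination (h * h - 1) * hq1 - (q : K)⁻¹ * hg1

end Places

theorem HahnSeries.toLex_single_lt_C {Γ R : Type*} [AddCommMonoid Γ] [LinearOrder Γ]
    [IsOrderedCancelAddMonoid Γ] [Semiring R] [PartialOrder R] {n : Γ} (hn : 0 < n) (a : R) {r : R}
    (hr : 0 < r) : toLex (single n a) < toLex (C r) := by
  refine (HahnSeries.lt_iff _ _).2 ⟨0, fun j hj => ?_, ?_⟩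
  · simp [hj.ne, (hj.trans hn).ne]
  · simpa [hn.ne] using hr

def toLexRingEquiv (α : Type*) [Semiring α] : α ≃+* Lex α where
  toEquiv := toLex
  map_mul' _ _ := rfl
  map_add' _ _ := rfl

@[simp]
theorem toLexRingEquiv_apply {α : Type*} [Semiring α] (a : α) : toLexRingEquiv α a = toLex a :=
  rfl

section OrderingAt

variable {R : Type*} [Field R] [LinearOrder R] [IsStrictOrderedRing R]

/-- Expansion at `c`: `RatFunc.X` goes to `c + X`, so the lexicographic order on Laurent series
makes `X` infinitesimally larger than `c`. -/
noncomputable def laurentAt (c : R) : RatFunc R →+* Lex (LaurentSeries R) :=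
  RatFunc.liftRingHom
    (RingHom.comp (toLexRingEquiv (LaurentSeries R) : LaurentSeries R →+* Lex (LaurentSeries R))
      ((algebraMap R[X] (LaurentSeries R)).comp (taylorEquiv c : R[X] →+* R[X]))) <|
    nonZeroDivisors_le_comap_nonZeroDivisors_of_injective _ <|
      (toLexRingEquiv _).injective.comp <|
        (FaithfulSMul.algebraMap_injective R[X] (LaurentSeries R)).comp (taylorEquiv c).injective

theorem laurentAt_algebraMap (c : R) (p : R[X]) :
    laurentAt c (algebraMap R[X] (RatFunc R) p) =
      toLex (algebraMap R[X] (LaurentSeries R) (p.taylor c)) := by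
  rw [laurentAt, RatFunc.liftRingHom_algebraMap]
  rfl

theorem laurentAt_C (c a : R) : laurentAt c (RatFunc.C a) = toLex (HahnSeries.C a) := by
  rw [← RatFunc.algebraMap_C, laurentAt_algebraMap, taylor_C]
  simp

theorem laurentAt_X_sub_C (c : R) :
    laurentAt c (RatFunc.X - RatFunc.C c) = toLex (single 1 1) := by
  rw [← RatFunc.algebraMap_C, ← RatFunc.algebraMap_X, ← map_sub, laurentAt_algebraMap]
  simp

def orderingAt (c : R) : Set (RatFunc R) := {f | 0 ≤ laurentAt c f}

theorem isOrdering_orderingAt (c : R) : IsOrdering (orderingAt c) :=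
  isOrdering_setOf_nonneg_map (laurentAt c)

noncomputable def scaledShift (ι c : R) : RatFunc R :=
  RatFunc.C ι⁻¹ * (RatFunc.X - RatFunc.C c)

theorem scaledShift_sub_scaledShift (ι c d : R) :
    scaledShift ι c - scaledShift ι d = RatFunc.C (ι⁻¹ * (d - c)) := by
  simp only [scaledShift, map_mul, map_sub]
  ring

theorem inv_one_add_mul_self_scaledShift_sub_mem_orderingAt (ι c : R) :
    (1 + scaledShift ι c * scaledShift ι c)⁻¹ - ((2 / 3 : ℚ) : RatFunc R) ∈ orderingAt c := by
  set e := laurentAt c (scaledShift ι c)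
  have he : e * e < 1 / 2 := by
    have hsq : e * e = toLex (single 2 (ι⁻¹ * ι⁻¹)) := by
      simp only [e, scaledShift, map_mul, laurentAt_C, laurentAt_X_sub_C, ← toLex_mul, C_apply,
        single_mul_single]
      norm_num
    have hhalf : (1 / 2 : Lex (LaurentSeries R)) = toLex (HahnSeries.C (1 / 2)) := by
      rw [← laurentAt_C c, map_div₀, map_one, map_ofNat, map_div₀, map_one, map_ofNat]
    rw [hsq, hhalf]
    exact toLex_single_lt_C two_pos _ one_half_pos
  show 0 ≤ laurentAt c _
  rw [map_sub, map_inv₀, map_add, map_one, map_mul, map_ratCast, sub_nonneg]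
  rw [le_inv_comm₀ (by norm_num) (add_pos_of_pos_of_nonneg one_pos (mul_self_nonneg e))]
  push_cast
  linarith [(by norm_num : ((2 / 3 : ℚ)⁻¹ : Lex (LaurentSeries R)) = 3 / 2)]

end OrderingAt

theorem exists_infinitesimal_of_notMem_range {R : Type*} [Field R] [LinearOrder R]
    [IsStrictOrderedRing R] (i : ℝ →+* R) {x : R} (hx : x ∉ Set.range i) :
    ∃ ι : R, 0 < ι ∧ ∀ ε : ℝ, 0 < ε → ι < i ε := by
  have hi : StrictMono i :=
    (ringHom_monotone (fun r hr => Real.isSquare_iff.2 hr) i).strictMono_of_injective i.injective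
  have : ¬ Archimedean R := by
    intro
    let j := ConditionallyCompleteLinearOrderedField.inducedOrderRingHom R ℝ
    have hji : (j : R →+* ℝ).comp i = RingHom.id ℝ := Subsingleton.elim _ _
    exact hx ⟨j x, (j : R →+* ℝ).injective (RingHom.congr_fun hji (j x))⟩
  obtain ⟨y, hy⟩ : ∃ y : R, ∀ n : ℕ, (n : R) ≤ y := by
    simpa [archimedean_iff_nat_lt] using this
  have hy0 : 0 < y := one_pos.trans_le (by exact_mod_cast hy 1)
  refine ⟨y⁻¹, inv_pos.2 hy0, fun ε hε => ?_⟩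
  obtain ⟨n, hn⟩ := exists_nat_gt ε⁻¹
  have hiε : 0 < i ε := by simpa using hi hε
  rw [← inv_inv (i ε), inv_lt_inv₀ hy0 (inv_pos.2 hiε), ← map_inv₀]
  exact (hi hn).trans_le (by simpa using hy n)

theorem four_lt_mul_self_of_infinitesimal {R : Type*} [Field R] [LinearOrder R]
    [IsStrictOrderedRing R] (i : ℝ →+* R) {ι : R} (hι : 0 < ι) (hιlt : ∀ ε : ℝ, 0 < ε → ι < i ε)
    {s t : ℝ} (hst : s ≠ t) :
    4 < ι⁻¹ * (i s - i t) * (ι⁻¹ * (i s - i t)) := by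
  have hι1 : ι < 1 := by simpa using hιlt 1 one_pos
  have hιst : ι < (i s - i t) * (i s - i t) / 4 := by
    simpa [map_ofNat] using
      hιlt ((s - t) * (s - t) / 4) (div_pos (mul_self_pos.2 (sub_ne_zero.2 hst)) four_pos)
  rw [show ι⁻¹ * (i s - i t) * (ι⁻¹ * (i s - i t)) = (i s - i t) * (i s - i t) / (ι * ι) by
    field_simp, lt_div_iff₀ (by positivity)]
  nlinarith

theorem not_metrizableSpace_of_pairwise_disjoint {X ι : Type*} [TopologicalSpace X]
    [CompactSpace X] [Uncountable ι] (U : ι → Set X) (hdisj : Pairwise (Disjoint on U))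
    (hopen : ∀ i, IsOpen (U i)) (hne : ∀ i, (U i).Nonempty) :
    ¬ TopologicalSpace.MetrizableSpace X := by
  intro _
  let := TopologicalSpace.metrizableSpaceMetric X
  exact Set.not_countable_univ <|
    Set.PairwiseDisjoint.countable_of_isOpen (hdisj.set_pairwise Set.univ) (fun i _ => hopen i)
      (fun i _ => hne i)

theorem placeSpace_realClosure_not_metrizable_general
    {R : Type*} [Field R] [LinearOrder R] [IsStrictOrderedRing R]
    -- R is real closed:
    (hsq : ∀ a : R, 0 ≤ a → ∃ b : R, b * b = a)
    -- R contains ℝ and an element x transcendental over ℝ: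
    (i : ℝ →+* R) (x : R)
    (htrans : ∀ p : Polynomial ℝ, Polynomial.eval₂ i x p = 0 → p = 0) :
    ¬ TopologicalSpace.MetrizableSpace (PlaceSpace (RatFunc R)) := by
  obtain ⟨ι, hι, hιlt⟩ := exists_infinitesimal_of_notMem_range i (x := x) fun ⟨r, hr⟩ =>
    X_sub_C_ne_zero r (htrans _ (by simp [hr]))
  let h : ℝ → RatFunc R := fun t => scaledShift ι (i t)
  refine not_metrizableSpace_of_pairwise_disjoint
    (fun t => {φ : PlaceSpace (RatFunc R) | ((1 / 2 : ℝ) : WithTop ℝ) < φ.1 (1 + h t * h t)⁻¹})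
    (fun s t hst => Set.disjoint_left.2 ?_)
    (fun t => isOpen_setOf_coe_lt_apply (fun P hP => hP.inv_one_add_mul_self_mem_orderValRing _) _)
    (fun t => ?_)
  · rintro ⟨_, P, hP, rfl⟩ hs ht
    exact hP.sub_ne_map_of_four_lt_mul_self hsq RatFunc.C
      (hP.one_sub_mul_self_mem_of_half_lt_rPlace hs) (hP.one_sub_mul_self_mem_of_half_lt_rPlace ht)
      (four_lt_mul_self_of_infinitesimal i hι hιlt hst) (scaledShift_sub_scaledShift _ _ _)
  · have hP := isOrdering_orderingAt (i t)
    refine ⟨lambdaMap _ ⟨_, hP⟩, (coe_lt_rPlace_iff hP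
      (hP.inv_one_add_mul_self_mem_orderValRing _) _).2 ⟨2 / 3, by norm_num, ?_⟩⟩
    exact inv_one_add_mul_self_scaledShift_sub_mem_orderingAt ι (i t)

/-- STATEMENT 18: if `R` is a real closure of the rational function field `ℝ(X)`
(a real closed field containing `ℝ` and an element `x` transcendental over `ℝ`, with `R`
algebraic over `ℝ(x)`), then the space `M(R(Y))` of ℝ-places of `R(Y)`, with the quotient
topology induced from the Harrison topology, is not metrizable. -/
theorem placeSpace_realClosure_not_metrizable
    {R : Type*} [Field R] [LinearOrder R] [IsStrictOrderedRing R]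
    -- R is real closed:
    (hsq : ∀ a : R, 0 ≤ a → ∃ b : R, b * b = a)
    (hodd : ∀ p : Polynomial R, Odd p.natDegree → ∃ y : R, p.eval y = 0)
    -- R contains ℝ and an element x transcendental over ℝ:
    (i : ℝ →+* R) (x : R)
    (htrans : ∀ p : Polynomial ℝ, Polynomial.eval₂ i x p = 0 → p = 0)
    -- R is algebraic over the subfield ℝ(x) (equivalently, over the subring ℝ[x]):
    (halg : ∀ r : R, ∃ p : Polynomial R, p ≠ 0 ∧
      (∀ n : ℕ, p.coeff n ∈ Subring.closure (Set.range i ∪ {x})) ∧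
      Polynomial.eval r p = 0) :
    ¬ TopologicalSpace.MetrizableSpace (PlaceSpace (RatFunc R)) :=
  placeSpace_realClosure_not_metrizable_general hsq i x htrans
end
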